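/- arXiv:0708.2899 — 7 statements merged into one kernel-verified Lean document; each statement's English description precedes it below -/
import Mathlib

section
/- Let F be a holomorphic self-map of the open unit disk Δ and let τ ∈ ∂Δ. If the unrestricted limit lim_{z→τ} (F(z) − z)/(z − τ)³ = 0 (i.e., (F(z) − z)/(z − τ)³ → 0 as z → τ in Δ without restriction), then F(z) = z for all z ∈ Δ. -/
/-!
Let `H w = (τ + w) / (τ - w)` be the Herglotz kernel at `τ` (its real part is the Poisson kernel)
and `u = H ∘ F - H`. From `F z - z = o((z - τ) ^ 3)` we get `u z = o(z - τ)`, and along the radius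
ending at `τ` also `F z - z = o(1 - ‖z‖)`. The latter says that the angular derivative of `F` at `τ`
is `1`, so by Julia's lemma `F` maps every horodisc at `τ` into itself, i.e. `0 ≤ Re u`.
A holomorphic `u` with `0 ≤ Re u` that is `o(1 - ‖z‖)` along a radius vanishes: if `Re u` vanishes
somewhere, the maximum principle for the Cayley transform `(1 - u) / (1 + u)` makes `u` constant;
otherwise the Schwarz lemma for that transform gives `c * (1 - ‖z‖) ≤ ‖u z‖` with `c > 0`.
Hence `u = 0`, that is, `F = id`.
-/

open Filter Metric

open Complex ComplexConjugate Topology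

namespace BurnsKrantz

noncomputable def diskMobius (a z : ℂ) : ℂ := (a - z) / (1 - conj a * z)

theorem sq_norm_one_sub_conj_mul_sub_sq_norm_sub (a z : ℂ) :
    ‖1 - conj a * z‖ ^ 2 - ‖a - z‖ ^ 2 = (1 - ‖a‖ ^ 2) * (1 - ‖z‖ ^ 2) := by
  simp only [Complex.sq_norm, normSq_apply, sub_re, sub_im, mul_re, mul_im, one_re, one_im,
    conj_re, conj_im]
  ring

theorem one_sub_conj_mul_ne_zero {a z : ℂ} (ha : ‖a‖ ≤ 1) (hz : ‖z‖ < 1) :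
    1 - conj a * z ≠ 0 := by
  refine sub_ne_zero.2 fun h => ?_
  have : ‖conj a * z‖ < 1 := by
    rw [norm_mul, norm_conj]
    nlinarith [norm_nonneg a, norm_nonneg z]
  simp [← h] at this

theorem one_sub_sq_norm_diskMobius {a z : ℂ} (ha : ‖a‖ ≤ 1) (hz : ‖z‖ < 1) :
    1 - ‖diskMobius a z‖ ^ 2 = (1 - ‖a‖ ^ 2) * (1 - ‖z‖ ^ 2) / ‖1 - conj a * z‖ ^ 2 := by
  have hD : ‖1 - conj a * z‖ ^ 2 ≠ 0 :=
    pow_ne_zero 2 (norm_ne_zero_iff.2 (one_sub_conj_mul_ne_zero ha hz))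
  rw [← sq_norm_one_sub_conj_mul_sub_sq_norm_sub, sub_div, div_self hD, diskMobius, norm_div,
    div_pow]

theorem mapsTo_diskMobius {a : ℂ} (ha : a ∈ ball (0 : ℂ) 1) :
    Set.MapsTo (diskMobius a) (ball 0 1) (ball 0 1) := by
  intro z hz
  rw [mem_ball_zero_iff] at ha hz ⊢
  have h := one_sub_sq_norm_diskMobius ha.le hz
  have hpos : 0 < (1 - ‖a‖ ^ 2) * (1 - ‖z‖ ^ 2) / ‖1 - conj a * z‖ ^ 2 := by
    have := norm_pos_iff.2 (one_sub_conj_mul_ne_zero ha.le hz)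
    have ha2 : ‖a‖ ^ 2 < 1 := by nlinarith [norm_nonneg a]
    have hz2 : ‖z‖ ^ 2 < 1 := by nlinarith [norm_nonneg z]
    positivity
  nlinarith [norm_nonneg (diskMobius a z)]

theorem diskMobius_diskMobius {a z : ℂ} (ha : ‖a‖ < 1) (hz : ‖z‖ < 1) :
    diskMobius a (diskMobius a z) = z := by
  have hD := one_sub_conj_mul_ne_zero ha.le hz
  have haa : conj a * a = ((1 : ℂ) - (1 - ‖a‖ ^ 2 : ℝ)) := by
    rw [mul_comm, mul_conj, normSq_eq_norm_sq]; push_cast; ring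
  have ha1 : ((1 - ‖a‖ ^ 2 : ℝ) : ℂ) ≠ 0 := by
    norm_cast; nlinarith [norm_nonneg a]
  have hden : 1 - conj a * diskMobius a z = (1 - ‖a‖ ^ 2 : ℝ) / (1 - conj a * z) := by
    rw [eq_div_iff hD, diskMobius, sub_mul, mul_assoc, div_mul_cancel₀ _ hD]
    linear_combination -haa
  have hnum : a - diskMobius a z = z * (1 - ‖a‖ ^ 2 : ℝ) / (1 - conj a * z) := by
    rw [eq_div_iff hD, diskMobius, sub_mul, div_mul_cancel₀ _ hD]
    linear_combination -z * haa
  rw [diskMobius, hden, hnum, div_div_div_cancel_right₀ hD, mul_div_cancel_right₀ _ ha1]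

theorem diskMobius_zero (a : ℂ) : diskMobius a 0 = a := by simp [diskMobius]

theorem diskMobius_self (a : ℂ) : diskMobius a a = 0 := by simp [diskMobius]

theorem differentiableOn_diskMobius {a : ℂ} (ha : ‖a‖ ≤ 1) :
    DifferentiableOn ℂ (diskMobius a) (ball 0 1) :=
  DifferentiableOn.div (by fun_prop) (by fun_prop) fun z hz =>
    one_sub_conj_mul_ne_zero ha (mem_ball_zero_iff.1 hz)

theorem norm_diskMobius_le_of_mapsTo_ball {f : ℂ → ℂ} (hd : DifferentiableOn ℂ f (ball 0 1))
    (hm : Set.MapsTo f (ball 0 1) (ball 0 1)) {z w : ℂ} (hz : z ∈ ball (0 : ℂ) 1)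
    (hw : w ∈ ball (0 : ℂ) 1) :
    ‖diskMobius (f w) (f z)‖ ≤ ‖diskMobius w z‖ := by
  have hfw := mem_ball_zero_iff.1 (hm hw)
  have hw' := mem_ball_zero_iff.1 hw
  have hg := Complex.norm_le_norm_of_mapsTo_ball
    (f := diskMobius (f w) ∘ f ∘ diskMobius w)
    ((differentiableOn_diskMobius hfw.le).comp (hd.comp (differentiableOn_diskMobius hw'.le)
      (mapsTo_diskMobius hw)) (hm.comp (mapsTo_diskMobius hw)))
    (((mapsTo_diskMobius (hm hw)).comp (hm.comp (mapsTo_diskMobius hw))).mono_right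
      ball_subset_closedBall)
    (by simp [diskMobius_zero, diskMobius_self]) (mem_ball_zero_iff.1 (mapsTo_diskMobius hw hz))
  simpa [diskMobius_diskMobius hw' (mem_ball_zero_iff.1 hz)] using hg

theorem schwarz_pick {f : ℂ → ℂ} (hd : DifferentiableOn ℂ f (ball 0 1))
    (hm : Set.MapsTo f (ball 0 1) (ball 0 1)) {z w : ℂ} (hz : z ∈ ball (0 : ℂ) 1)
    (hw : w ∈ ball (0 : ℂ) 1) :
    (1 - ‖w‖ ^ 2) * (1 - ‖z‖ ^ 2) * ‖1 - conj (f w) * f z‖ ^ 2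
      ≤ (1 - ‖f w‖ ^ 2) * (1 - ‖f z‖ ^ 2) * ‖1 - conj w * z‖ ^ 2 := by
  have h : 1 - ‖diskMobius w z‖ ^ 2 ≤ 1 - ‖diskMobius (f w) (f z)‖ ^ 2 := by
    have := norm_diskMobius_le_of_mapsTo_ball hd hm hz hw
    gcongr
  have hfz := mem_ball_zero_iff.1 (hm hz)
  have hfw := mem_ball_zero_iff.1 (hm hw)
  rw [mem_ball_zero_iff] at hz hw
  rw [one_sub_sq_norm_diskMobius hw.le hz, one_sub_sq_norm_diskMobius hfw.le hfz,
    div_le_div_iff₀ (by simp [one_sub_conj_mul_ne_zero hw.le hz])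
      (by simp [one_sub_conj_mul_ne_zero hfw.le hfz])] at h
  exact h

theorem sq_one_sub_norm_zero_mul_one_sub_norm_le {f : ℂ → ℂ}
    (hd : DifferentiableOn ℂ f (ball 0 1)) (hm : Set.MapsTo f (ball 0 1) (ball 0 1)) {z : ℂ}
    (hz : z ∈ ball (0 : ℂ) 1) :
    (1 - ‖f 0‖) ^ 2 * (1 - ‖z‖) ≤ 2 * (1 - ‖f z‖) := by
  have h0 : (0 : ℂ) ∈ ball (0 : ℂ) 1 := mem_ball_self one_pos
  have hpick := schwarz_pick hd hm hz h0
  simp only [norm_zero, map_zero, zero_mul, sub_zero, norm_one] at hpick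
  have hf0 := mem_ball_zero_iff.1 (hm h0)
  have hfz := mem_ball_zero_iff.1 (hm hz)
  have hz' := mem_ball_zero_iff.1 hz
  have hden : 1 - ‖f 0‖ ≤ ‖1 - conj (f 0) * f z‖ := by
    have : ‖conj (f 0) * f z‖ ≤ ‖f 0‖ := by
      rw [norm_mul, norm_conj]
      exact mul_le_of_le_one_right (norm_nonneg _) hfz.le
    linarith [norm_sub_norm_le (1 : ℂ) (conj (f 0) * f z), norm_one (α := ℂ)]
  calc (1 - ‖f 0‖) ^ 2 * (1 - ‖z‖)
      ≤ ‖1 - conj (f 0) * f z‖ ^ 2 * (1 - ‖z‖ ^ 2) := by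
        refine mul_le_mul (pow_le_pow_left₀ (by linarith) hden 2) ?_ (by linarith) (by positivity)
        nlinarith [norm_nonneg z]
    _ ≤ (1 - ‖f 0‖ ^ 2) * (1 - ‖f z‖ ^ 2) := by linarith
    _ ≤ 1 - ‖f z‖ ^ 2 := by
        apply mul_le_of_le_one_left <;> nlinarith [norm_nonneg (f 0), norm_nonneg (f z)]
    _ ≤ 2 * (1 - ‖f z‖) := by nlinarith [norm_nonneg (f z)]

theorem norm_one_sub_conj_mul_of_norm_eq_one {τ : ℂ} (hτ : ‖τ‖ = 1) (z : ℂ) :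
    ‖1 - conj τ * z‖ = ‖τ - z‖ := by
  have hττ : τ * conj τ = 1 := by rw [mul_conj, normSq_eq_norm_sq, hτ]; simp
  rw [← one_mul ‖1 - conj τ * z‖, ← hτ, ← norm_mul, mul_sub, mul_one, ← mul_assoc, hττ, one_mul]

theorem poissonKernel_zero_of_norm_eq_one {τ : ℂ} (hτ : ‖τ‖ = 1) (z : ℂ) :
    poissonKernel 0 z τ = (1 - ‖z‖ ^ 2) / ‖1 - conj τ * z‖ ^ 2 := by
  simp [poissonKernel, hτ, norm_one_sub_conj_mul_of_norm_eq_one hτ z]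

theorem julia_poissonKernel_le {ι : Type*} {l : Filter ι} [l.NeBot] {f : ℂ → ℂ}
    (hd : DifferentiableOn ℂ f (ball 0 1)) (hm : Set.MapsTo f (ball 0 1) (ball 0 1))
    {w : ι → ℂ} (hw : ∀ᶠ i in l, w i ∈ ball (0 : ℂ) 1) {τ σ : ℂ} (hτ : ‖τ‖ = 1) (hσ : ‖σ‖ = 1)
    {β : ℝ} (hwτ : Tendsto w l (𝓝 τ)) (hfσ : Tendsto (fun i => f (w i)) l (𝓝 σ))
    (hβ : Tendsto (fun i => (1 - ‖f (w i)‖ ^ 2) / (1 - ‖w i‖ ^ 2)) l (𝓝 β))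
    {z : ℂ} (hz : z ∈ ball (0 : ℂ) 1) :
    poissonKernel 0 z τ ≤ β * poissonKernel 0 (f z) σ := by
  have key : ∀ᶠ i in l, (1 - ‖z‖ ^ 2) * ‖1 - conj (f (w i)) * f z‖ ^ 2
      ≤ (1 - ‖f (w i)‖ ^ 2) / (1 - ‖w i‖ ^ 2) * ((1 - ‖f z‖ ^ 2) * ‖1 - conj (w i) * z‖ ^ 2) := by
    filter_upwards [hw] with i hi
    have hpos : 0 < 1 - ‖w i‖ ^ 2 := by
      have := mem_ball_zero_iff.1 hi
      nlinarith [norm_nonneg (w i)]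
    rw [div_mul_eq_mul_div, le_div_iff₀ hpos]
    linarith [schwarz_pick hd hm hz hi]
  have hD : ∀ {a : ι → ℂ} {a₀ : ℂ} (x : ℂ), Tendsto a l (𝓝 a₀) →
      Tendsto (fun i => ‖1 - conj (a i) * x‖ ^ 2) l (𝓝 (‖1 - conj a₀ * x‖ ^ 2)) := fun x h =>
    (((continuous_const.sub (continuous_conj.mul continuous_const)).norm.pow 2).tendsto _).comp h
  have hlim := le_of_tendsto_of_tendsto ((hD (f z) hfσ).const_mul _)
    (hβ.mul ((hD z hwτ).const_mul _)) key
  have hτz : 0 < ‖1 - conj τ * z‖ ^ 2 := by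
    simp [one_sub_conj_mul_ne_zero hτ.le (mem_ball_zero_iff.1 hz)]
  have hσf : 0 < ‖1 - conj σ * f z‖ ^ 2 := by
    simp [one_sub_conj_mul_ne_zero hσ.le (mem_ball_zero_iff.1 (hm hz))]
  rw [poissonKernel_zero_of_norm_eq_one hτ, poissonKernel_zero_of_norm_eq_one hσ, mul_div_assoc',
    div_le_div_iff₀ hτz hσf]
  linarith

noncomputable def cayley (v : ℂ) : ℂ := (1 - v) / (1 + v)

theorem one_add_ne_zero_of_re_nonneg {v : ℂ} (hv : 0 ≤ v.re) : 1 + v ≠ 0 := by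
  intro h
  have := congrArg re h
  simp only [add_re, one_re, zero_re] at this
  linarith

theorem one_sub_sq_norm_cayley {v : ℂ} (hv : 0 ≤ v.re) :
    1 - ‖cayley v‖ ^ 2 = 4 * v.re / ‖1 + v‖ ^ 2 := by
  have hD : ‖1 + v‖ ^ 2 ≠ 0 := by simp [one_add_ne_zero_of_re_nonneg hv]
  rw [eq_div_iff hD, cayley, norm_div, div_pow, sub_mul, one_mul, div_mul_cancel₀ _ hD]
  simp only [Complex.sq_norm, normSq_apply, add_re, add_im, sub_re, sub_im, one_re, one_im]
  ring

theorem norm_cayley_le_one {v : ℂ} (hv : 0 ≤ v.re) : ‖cayley v‖ ≤ 1 := by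
  have h := one_sub_sq_norm_cayley hv
  have : 0 ≤ 4 * v.re / ‖1 + v‖ ^ 2 := by positivity
  nlinarith [norm_nonneg (cayley v)]

theorem norm_cayley_lt_one {v : ℂ} (hv : 0 < v.re) : ‖cayley v‖ < 1 := by
  have h := one_sub_sq_norm_cayley hv.le
  have : 0 < 4 * v.re / ‖1 + v‖ ^ 2 := by
    have := norm_pos_iff.2 (one_add_ne_zero_of_re_nonneg hv.le)
    positivity
  nlinarith [norm_nonneg (cayley v)]

theorem norm_cayley_eq_one {v : ℂ} (hv : v.re = 0) : ‖cayley v‖ = 1 := by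
  have h := one_sub_sq_norm_cayley hv.ge
  rw [hv, mul_zero, zero_div, sub_eq_zero] at h
  nlinarith [norm_nonneg (cayley v)]

theorem norm_one_sub_cayley_le {v : ℂ} (hv : 0 ≤ v.re) : ‖1 - cayley v‖ ≤ 2 * ‖v‖ := by
  have hD := one_add_ne_zero_of_re_nonneg hv
  have h1 : 1 ≤ ‖1 + v‖ := by
    have := abs_re_le_norm (1 + v)
    simp only [add_re, one_re] at this
    linarith [le_abs_self (1 + v.re)]
  have : 1 - cayley v = 2 * v / (1 + v) := by
    rw [cayley, eq_div_iff hD, sub_mul, div_mul_cancel₀ _ hD]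
    ring
  rw [this, norm_div, norm_mul, Complex.norm_two]
  exact div_le_self (by positivity) h1

theorem cayley_inj_of_re_nonneg {a b : ℂ} (ha : 0 ≤ a.re) (hb : 0 ≤ b.re)
    (h : cayley a = cayley b) : a = b := by
  rw [cayley, cayley, div_eq_div_iff (one_add_ne_zero_of_re_nonneg ha)
    (one_add_ne_zero_of_re_nonneg hb)] at h
  linear_combination -h / 2

theorem differentiableOn_cayley_comp {U : Set ℂ} {u : ℂ → ℂ} (hu : DifferentiableOn ℂ u U)
    (hre : ∀ z ∈ U, 0 ≤ (u z).re) : DifferentiableOn ℂ (fun z => cayley (u z)) U :=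
  ((differentiableOn_const 1).sub hu).div ((differentiableOn_const 1).add hu) fun z hz =>
    one_add_ne_zero_of_re_nonneg (hre z hz)

theorem eq_of_re_nonneg_of_re_eq_zero {U : Set ℂ} (hc : IsPreconnected U) (ho : IsOpen U)
    {u : ℂ → ℂ} (hu : DifferentiableOn ℂ u U) (hre : ∀ z ∈ U, 0 ≤ (u z).re) {z₀ : ℂ}
    (hz₀ : z₀ ∈ U) (h₀ : (u z₀).re = 0) : ∀ z ∈ U, u z = u z₀ := by
  have hmax : IsMaxOn (fun z => ‖cayley (u z)‖) U z₀ := fun z hz => by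
    simpa [norm_cayley_eq_one h₀] using norm_cayley_le_one (hre z hz)
  intro z hz
  exact cayley_inj_of_re_nonneg (hre z hz) (hre z₀ hz₀) <|
    Complex.eqOn_of_isPreconnected_of_isMaxOn_norm hc ho (differentiableOn_cayley_comp hu hre) hz₀
      hmax hz

theorem exists_pos_mul_one_sub_norm_le_norm_of_re_pos {u : ℂ → ℂ}
    (hu : DifferentiableOn ℂ u (ball 0 1)) (hre : ∀ z ∈ ball (0 : ℂ) 1, 0 < (u z).re) :
    ∃ c > 0, ∀ z ∈ ball (0 : ℂ) 1, c * (1 - ‖z‖) ≤ ‖u z‖ := by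
  have hG : Set.MapsTo (fun z => cayley (u z)) (ball 0 1) (ball 0 1) := fun z hz =>
    mem_ball_zero_iff.2 (norm_cayley_lt_one (hre z hz))
  have hG0 : ‖cayley (u 0)‖ < 1 := norm_cayley_lt_one (hre 0 (mem_ball_self one_pos))
  refine ⟨(1 - ‖cayley (u 0)‖) ^ 2 / 4, by nlinarith, fun z hz => ?_⟩
  have := sq_one_sub_norm_zero_mul_one_sub_norm_le
    (differentiableOn_cayley_comp hu fun z hz => (hre z hz).le) hG hz
  linarith [norm_sub_norm_le 1 (cayley (u z)), norm_one (α := ℂ),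
    norm_one_sub_cayley_le (hre z hz).le]

theorem eq_zero_of_re_nonneg_of_tendsto {u : ℂ → ℂ} (hu : DifferentiableOn ℂ u (ball 0 1))
    (hre : ∀ z ∈ ball (0 : ℂ) 1, 0 ≤ (u z).re) {ι : Type*} {l : Filter ι} [l.NeBot]
    {w : ι → ℂ} (hw : ∀ᶠ i in l, w i ∈ ball (0 : ℂ) 1)
    (hlim : Tendsto (fun i => ‖u (w i)‖ / (1 - ‖w i‖)) l (𝓝 0)) :
    ∀ z ∈ ball (0 : ℂ) 1, u z = 0 := by
  have hpos : ∀ᶠ i in l, 0 < 1 - ‖w i‖ := hw.mono fun i hi => by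
    linarith [mem_ball_zero_iff.1 hi]
  by_cases h : ∃ z₀ ∈ ball (0 : ℂ) 1, (u z₀).re = 0
  · obtain ⟨z₀, hz₀, h₀⟩ := h
    have hconst := eq_of_re_nonneg_of_re_eq_zero (convex_ball 0 1).isPreconnected isOpen_ball
      hu hre hz₀ h₀
    have : ‖u z₀‖ ≤ 0 := ge_of_tendsto hlim <| (hw.and hpos).mono fun i ⟨hi, hi'⟩ => by
      rw [hconst _ hi]
      exact le_div_self (norm_nonneg _) hi' (by linarith [norm_nonneg (w i)])
    intro z hz
    rw [hconst z hz, ← norm_le_zero_iff]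
    exact this
  · push Not at h
    obtain ⟨c, hc, hbound⟩ := exists_pos_mul_one_sub_norm_le_norm_of_re_pos hu fun z hz =>
      (hre z hz).lt_of_ne' (h z hz)
    have : c ≤ 0 := ge_of_tendsto hlim <| (hw.and hpos).mono fun i ⟨hi, hi'⟩ =>
      (le_div_iff₀ hi').2 (hbound _ hi)
    linarith

theorem tendsto_one_sub_sq_norm_div_one_sub_sq_norm {ι : Type*} {l : Filter ι} {a b : ι → ℂ}
    (ha : ∀ᶠ i in l, ‖a i‖ < 1) (hb : ∀ᶠ i in l, ‖b i‖ < 1)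
    (h : Tendsto (fun i => ‖b i - a i‖ / (1 - ‖a i‖)) l (𝓝 0)) :
    Tendsto (fun i => (1 - ‖b i‖ ^ 2) / (1 - ‖a i‖ ^ 2)) l (𝓝 1) := by
  suffices Tendsto (fun i => (1 - ‖b i‖ ^ 2) / (1 - ‖a i‖ ^ 2) - 1) l (𝓝 0) by
    simpa using this.add_const 1
  refine squeeze_zero_norm' ((ha.and hb).mono fun i ⟨hai, hbi⟩ => ?_)
    (by simpa using h.const_mul 2)
  have hpos : 0 < 1 - ‖a i‖ := by linarith
  have hsq : 1 - ‖a i‖ ≤ 1 - ‖a i‖ ^ 2 := by nlinarith [norm_nonneg (a i)]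
  have hnum : |‖a i‖ ^ 2 - ‖b i‖ ^ 2| ≤ 2 * ‖b i - a i‖ := by
    have := abs_norm_sub_norm_le (b i) (a i)
    rw [sq_sub_sq, abs_mul, abs_sub_comm, abs_of_nonneg (by positivity : 0 ≤ ‖a i‖ + ‖b i‖)]
    nlinarith [abs_nonneg (‖b i‖ - ‖a i‖)]
  rw [div_sub_one (by linarith), sub_sub_sub_cancel_left, Real.norm_eq_abs, abs_div,
    abs_of_pos (by linarith : 0 < 1 - ‖a i‖ ^ 2)]
  calc |‖a i‖ ^ 2 - ‖b i‖ ^ 2| / (1 - ‖a i‖ ^ 2)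
      ≤ 2 * ‖b i - a i‖ / (1 - ‖a i‖) :=
        div_le_div₀ (by positivity) hnum hpos hsq
    _ = 2 * (‖b i - a i‖ / (1 - ‖a i‖)) := mul_div_assoc _ _ _

theorem tendsto_ofReal_mul_nhdsLT_one {τ : ℂ} (hτ : ‖τ‖ = 1) :
    Tendsto (fun r : ℝ => (r : ℂ) * τ) (𝓝[<] 1) (𝓝[ball 0 1] τ) := by
  refine tendsto_nhdsWithin_iff.2 ⟨?_, ?_⟩
  · have : Continuous fun r : ℝ => (r : ℂ) * τ := by fun_prop
    simpa using (this.tendsto 1).mono_left nhdsWithin_le_nhds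
  · filter_upwards [Ioo_mem_nhdsLT zero_lt_one] with r hr
    simp [hτ, abs_of_pos hr.1, hr.2]

theorem tendsto_norm_div_one_sub_norm_ofReal_mul {τ : ℂ} (hτ : ‖τ‖ = 1) {g : ℂ → ℂ}
    (h : Tendsto (fun z => g z / (z - τ)) (𝓝[ball 0 1] τ) (𝓝 0)) :
    Tendsto (fun r : ℝ => ‖g (r * τ)‖ / (1 - ‖(r : ℂ) * τ‖)) (𝓝[<] 1) (𝓝 0) := by
  have := (h.comp (tendsto_ofReal_mul_nhdsLT_one hτ)).norm
  rw [norm_zero] at this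
  refine this.congr' ?_
  filter_upwards [Ioo_mem_nhdsLT zero_lt_one] with r hr
  have : (r : ℂ) * τ - τ = ((r - 1 : ℝ) : ℂ) * τ := by push_cast; ring
  simp only [Function.comp_apply, norm_div, this, norm_mul, hτ, mul_one, Complex.norm_real,
    Real.norm_eq_abs, abs_of_pos hr.1, abs_of_neg (sub_neg.2 hr.2), neg_sub]

theorem tendsto_nhds_of_tendsto_sub_div_sub {l : Filter ℂ} {τ : ℂ} (hl : l ≤ 𝓝 τ)
    (hz : ∀ᶠ z in l, z ≠ τ) {F : ℂ → ℂ} (hq : Tendsto (fun z => (F z - z) / (z - τ)) l (𝓝 0)) :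
    Tendsto F l (𝓝 τ) := by
  have := (hq.mul ((tendsto_id.sub_const τ).mono_left hl)).add (tendsto_id.mono_left hl)
  simp only [sub_self, mul_zero, zero_add] at this
  refine this.congr' (hz.mono fun z hz => ?_)
  simp [div_mul_cancel₀ _ (sub_ne_zero.2 hz)]

theorem herglotzRieszKernel_zero_sub {τ a b : ℂ} (ha : a ≠ τ) (hb : b ≠ τ) :
    herglotzRieszKernel 0 a τ - herglotzRieszKernel 0 b τ
      = 2 * τ * (a - b) / ((τ - a) * (τ - b)) := by
  have ha' := sub_ne_zero.2 ha.symm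
  have hb' := sub_ne_zero.2 hb.symm
  simp only [herglotzRieszKernel, sub_zero]
  field_simp
  ring

theorem tendsto_div_sub_of_tendsto_div_sub_pow_three {l : Filter ℂ} {τ : ℂ} (hl : l ≤ 𝓝 τ)
    {g : ℂ → ℂ} (h : Tendsto (fun z => g z / (z - τ) ^ 3) l (𝓝 0)) :
    Tendsto (fun z => g z / (z - τ)) l (𝓝 0) := by
  -- no `z ≠ τ` is needed: at `z = τ` both sides below are `0`, as `x / 0 = 0`
  have hsub : Tendsto (fun z => (z - τ) ^ 2) l (𝓝 0) := by
    simpa using ((tendsto_id.sub_const τ).pow 2).mono_left hl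
  have hmul : Tendsto (fun z => g z / (z - τ) ^ 3 * (z - τ) ^ 2) l (𝓝 0) := by
    simpa using h.mul hsub
  refine hmul.congr fun z => ?_
  rcases eq_or_ne z τ with rfl | hz
  · simp
  · field_simp [sub_ne_zero.2 hz]

theorem tendsto_herglotzRieszKernel_sub_div {l : Filter ℂ} {F : ℂ → ℂ} {τ : ℂ} (hl : l ≤ 𝓝 τ)
    (hz : ∀ᶠ z in l, z ≠ τ) (hFz : ∀ᶠ z in l, F z ≠ τ)
    (hlim : Tendsto (fun z => (F z - z) / (z - τ) ^ 3) l (𝓝 0)) :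
    Tendsto (fun z => (herglotzRieszKernel 0 (F z) τ - herglotzRieszKernel 0 z τ) / (z - τ)) l
      (𝓝 0) := by
  have hq := tendsto_div_sub_of_tendsto_div_sub_pow_three hl hlim
  have hden : Tendsto (fun z => 1 + (F z - z) / (z - τ)) l (𝓝 1) := by
    simpa using hq.const_add 1
  have hmain : Tendsto (fun z => 2 * τ * ((F z - z) / (z - τ) ^ 3) / (1 + (F z - z) / (z - τ))) l
      (𝓝 0) := by
    have := (hlim.const_mul (2 * τ)).div hden one_ne_zero
    rwa [mul_zero, zero_div] at this
  refine hmain.congr' ?_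
  filter_upwards [hz, hFz] with z hz hFz
  have hz' := sub_ne_zero.2 hz
  have hτz := sub_ne_zero.2 hz.symm
  have hτF := sub_ne_zero.2 hFz.symm
  have hq : 1 + (F z - z) / (z - τ) = (F z - τ) / (z - τ) := by
    field_simp
    ring
  rw [herglotzRieszKernel_zero_sub hFz hz, hq]
  field_simp
  ring

theorem differentiableOn_herglotzRieszKernel_zero_comp {U : Set ℂ} {f : ℂ → ℂ} {τ : ℂ}
    (hf : DifferentiableOn ℂ f U) (hfτ : ∀ z ∈ U, f z ≠ τ) :
    DifferentiableOn ℂ (fun z => herglotzRieszKernel 0 (f z) τ) U := by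
  simp only [herglotzRieszKernel, sub_zero]
  exact ((differentiableOn_const τ).add hf).div ((differentiableOn_const τ).sub hf) fun z hz =>
    sub_ne_zero.2 (hfτ z hz).symm

theorem eq_of_herglotzRieszKernel_zero_eq {τ a b : ℂ} (hτ : τ ≠ 0) (ha : a ≠ τ) (hb : b ≠ τ)
    (h : herglotzRieszKernel 0 a τ = herglotzRieszKernel 0 b τ) : a = b := by
  rw [← sub_eq_zero, herglotzRieszKernel_zero_sub ha hb] at h
  simpa [hτ, sub_eq_zero, ha.symm, hb.symm] using h

theorem poissonKernel_le_of_tendsto_sub_div {F : ℂ → ℂ} (hF : DifferentiableOn ℂ F (ball 0 1))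
    (hFself : Set.MapsTo F (ball 0 1) (ball 0 1)) {τ : ℂ} (hτ : ‖τ‖ = 1)
    (hq : Tendsto (fun z => (F z - z) / (z - τ)) (𝓝[ball 0 1] τ) (𝓝 0)) {z : ℂ}
    (hz : z ∈ ball (0 : ℂ) 1) :
    poissonKernel 0 z τ ≤ poissonKernel 0 (F z) τ := by
  have hradial := tendsto_ofReal_mul_nhdsLT_one hτ
  have hw := (tendsto_nhdsWithin_iff.1 hradial).2
  have hFτ := tendsto_nhds_of_tendsto_sub_div_sub nhdsWithin_le_nhds
    (eventually_nhdsWithin_of_forall fun z hz h => by simp [h, hτ] at hz) hq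
  have hq' := tendsto_norm_div_one_sub_norm_ofReal_mul hτ hq
  have hratio := tendsto_one_sub_sq_norm_div_one_sub_sq_norm (a := fun r : ℝ => (r : ℂ) * τ)
    (b := fun r : ℝ => F (r * τ)) (hw.mono fun r hr => mem_ball_zero_iff.1 hr)
    (hw.mono fun r hr => mem_ball_zero_iff.1 (hFself hr)) hq'
  simpa using julia_poissonKernel_le hF hFself hw hτ hτ (hradial.mono_right nhdsWithin_le_nhds)
    (hFτ.comp hradial) hratio hz

end BurnsKrantz

open BurnsKrantz in
/-- Burns–Krantz: if `F` is a holomorphic self-map of the open unit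
disk `Δ = ball 0 1` and for some `τ` with `|τ| = 1` the unrestricted limit
`lim_{z→τ, z∈Δ} (F z - z)/(z - τ)^3 = 0`, then `F` is the identity on `Δ`. -/
theorem burns_krantz_disk (F : ℂ → ℂ)
    (hF : DifferentiableOn ℂ F (ball (0 : ℂ) 1))
    (hFself : Set.MapsTo F (ball (0 : ℂ) 1) (ball (0 : ℂ) 1))
    (τ : ℂ) (hτ : ‖τ‖ = 1)
    (hlim : Tendsto (fun z : ℂ => (F z - z) / (z - τ) ^ 3)
      (nhdsWithin τ (ball (0 : ℂ) 1)) (nhds 0)) :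
    ∀ z ∈ ball (0 : ℂ) 1, F z = z := by
  have hl : 𝓝[ball (0 : ℂ) 1] τ ≤ 𝓝 τ := nhdsWithin_le_nhds
  have hne : ∀ z ∈ ball (0 : ℂ) 1, z ≠ τ := fun z hz h => by simp [h, hτ] at hz
  have hFne : ∀ z ∈ ball (0 : ℂ) 1, F z ≠ τ := fun z hz => hne _ (hFself hz)
  set u : ℂ → ℂ := fun z => herglotzRieszKernel 0 (F z) τ - herglotzRieszKernel 0 z τ
  have hre : ∀ z ∈ ball (0 : ℂ) 1, 0 ≤ (u z).re := fun z hz => by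
    have := poissonKernel_le_of_tendsto_sub_div hF hFself hτ
      (tendsto_div_sub_of_tendsto_div_sub_pow_three hl hlim) hz
    simpa [u, poissonKernel_eq_re_herglotzRieszKernel] using this
  have hu0 := eq_zero_of_re_nonneg_of_tendsto
    ((differentiableOn_herglotzRieszKernel_zero_comp hF hFne).sub
      (differentiableOn_herglotzRieszKernel_zero_comp differentiableOn_id hne)) hre
    (tendsto_nhdsWithin_iff.1 (tendsto_ofReal_mul_nhdsLT_one hτ)).2
    (tendsto_norm_div_one_sub_norm_ofReal_mul hτ (tendsto_herglotzRieszKernel_sub_div hl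
      (eventually_nhdsWithin_of_forall hne) (eventually_nhdsWithin_of_forall hFne) hlim))
  intro z hz
  exact eq_of_herglotzRieszKernel_zero_eq (by rintro rfl; simp at hτ) (hFne z hz) (hne z hz)
    (sub_eq_zero.1 (hu0 z hz))
end

section
/- Let F be a holomorphic self-map of the open unit disk Δ and let τ ∈ ∂Δ. If the angular limit ∠lim_{z→τ} (F(z) − z)/(z − τ)³ = 0, then F(z) = z for all z ∈ Δ. -/
open Filter Metric

/-- The nontangential (Stolz-type) approach region `Γ_k(τ)` at a boundary point `τ`
of the unit disk: `{z ∈ Δ : |z - τ| / (1 - |z|) < k}`. -/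
def nontangentialRegion (k : ℝ) (τ : ℂ) : Set ℂ :=
  {z : ℂ | ‖z‖ < 1 ∧ ‖z - τ‖ < k * (1 - ‖z‖)}

/-- `g` has angular limit `L` at the boundary point `τ`: `g z → L` as `z → τ`
within every nontangential approach region `Γ_k(τ)`, `k > 1`. -/
def AngularLimit (g : ℂ → ℂ) (τ L : ℂ) : Prop :=
  ∀ k : ℝ, 1 < k →
    Tendsto g (nhdsWithin τ (nontangentialRegion k τ)) (nhds L)

/-!
Along the radius ending at `τ` we have `F (rτ) - rτ = o((1 - r)³)`. In particular
`F (rτ) → τ` and `1 - ‖F (rτ)‖² ~ 1 - r²`, so by Julia's lemma `F` maps every horodisk at `τ`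
into itself. Through the Cayley map `C w = (τ + w) / (τ - w)` onto the right half-plane this says
that `p = C ∘ F - C` has nonnegative real part. But `p (rτ) = o(1 - r)`, while a Harnack-type
inequality (Schwarz–Pick applied to a Cayley transform of `p`) gives `‖p (rτ)‖ ≥ c (1 - r)` with
`c > 0` unless `p` vanishes identically. Hence `p = 0`, that is `F z = z`.
-/

open Complex ComplexConjugate Asymptotics Set Topology

noncomputable def mobius (a z : ℂ) : ℂ := (a - z) / (1 - conj a * z)

section Mobius

variable {a z : ℂ}

lemma one_sub_conj_mul_ne_zero (ha : ‖a‖ < 1) (hz : ‖z‖ ≤ 1) : 1 - conj a * z ≠ 0 := by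
  refine sub_ne_zero.mpr fun h => ?_
  have : ‖conj a * z‖ < 1 := by
    rw [norm_mul, norm_conj]
    nlinarith [norm_nonneg a, norm_nonneg z]
  rw [← h, norm_one] at this
  exact this.false

lemma normSq_one_sub_conj_mul_sub_normSq_sub (a z : ℂ) :
    normSq (1 - conj a * z) - normSq (a - z) = (1 - normSq a) * (1 - normSq z) := by
  simp only [normSq_apply, sub_re, sub_im, mul_re, mul_im, conj_re, conj_im, one_re, one_im]
  ring

lemma one_sub_sq_norm_mobius (ha : ‖a‖ < 1) (hz : ‖z‖ < 1) :
    1 - ‖mobius a z‖ ^ 2 = (1 - ‖a‖ ^ 2) * (1 - ‖z‖ ^ 2) / ‖1 - conj a * z‖ ^ 2 := by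
  have hd : ‖1 - conj a * z‖ ^ 2 ≠ 0 :=
    pow_ne_zero 2 (norm_ne_zero_iff.mpr (one_sub_conj_mul_ne_zero ha hz.le))
  rw [mobius, norm_div, div_pow, eq_div_iff hd, sub_mul, div_mul_cancel₀ _ hd]
  simp only [Complex.sq_norm]
  linarith [normSq_one_sub_conj_mul_sub_normSq_sub a z]

lemma norm_mobius_lt_one (ha : ‖a‖ < 1) (hz : ‖z‖ < 1) : ‖mobius a z‖ < 1 := by
  have h : 0 < 1 - ‖mobius a z‖ ^ 2 := by
    rw [one_sub_sq_norm_mobius ha hz]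
    have := norm_pos_iff.mpr (one_sub_conj_mul_ne_zero ha hz.le)
    have : 0 < 1 - ‖a‖ ^ 2 := by nlinarith [norm_nonneg a]
    have : 0 < 1 - ‖z‖ ^ 2 := by nlinarith [norm_nonneg z]
    positivity
  nlinarith [norm_nonneg (mobius a z)]

lemma mapsTo_mobius (ha : ‖a‖ < 1) : MapsTo (mobius a) (ball 0 1) (ball 0 1) := fun _ hz => by
  rw [mem_ball_zero_iff] at *
  exact norm_mobius_lt_one ha hz

lemma differentiableOn_mobius (ha : ‖a‖ < 1) : DifferentiableOn ℂ (mobius a) (ball 0 1) :=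
  ((differentiableOn_const a).sub differentiableOn_id).div
    ((differentiableOn_const 1).sub ((differentiableOn_const _).mul differentiableOn_id))
    fun _ hz => one_sub_conj_mul_ne_zero ha (mem_ball_zero_iff.mp hz).le

@[simp] lemma mobius_zero_right (a : ℂ) : mobius a 0 = a := by simp [mobius]

@[simp] lemma mobius_self (a : ℂ) : mobius a a = 0 := by simp [mobius]

lemma mobius_mobius (ha : ‖a‖ < 1) (hz : ‖z‖ < 1) : mobius a (mobius a z) = z := by
  have hd := one_sub_conj_mul_ne_zero ha hz.le
  have ha' : 1 - a * conj a ≠ 0 := by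
    simpa [mul_comm] using one_sub_conj_mul_ne_zero ha ha.le
  have hnum : a - (a - z) / (1 - conj a * z) = z * (1 - a * conj a) / (1 - conj a * z) := by
    rw [eq_div_iff hd, sub_mul, div_mul_cancel₀ _ hd]
    ring
  have hden : 1 - conj a * ((a - z) / (1 - conj a * z)) = (1 - a * conj a) / (1 - conj a * z) := by
    rw [eq_div_iff hd, sub_mul, mul_assoc, div_mul_cancel₀ _ hd]
    ring
  rw [mobius, mobius, hnum, hden, div_div_div_cancel_right₀ hd, mul_div_cancel_right₀ z ha']

lemma norm_le_norm_mobius_of_apply_eq_zero {g : ℂ → ℂ} (hg : DifferentiableOn ℂ g (ball 0 1))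
    (hgm : MapsTo g (ball 0 1) (ball 0 1)) {w : ℂ} (hw : ‖w‖ < 1) (hgw : g w = 0)
    (hz : ‖z‖ < 1) : ‖g z‖ ≤ ‖mobius w z‖ := by
  have key := norm_le_norm_of_mapsTo_ball (hg.comp (differentiableOn_mobius hw) (mapsTo_mobius hw))
    ((hgm.comp (mapsTo_mobius hw)).mono_right ball_subset_closedBall) (by simp [hgw])
    (norm_mobius_lt_one hw hz)
  simpa [mobius_mobius hw hz] using key

/-- **Schwarz–Pick lemma**. -/
lemma norm_mobius_apply_le {F : ℂ → ℂ} (hF : DifferentiableOn ℂ F (ball 0 1))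
    (hFm : MapsTo F (ball 0 1) (ball 0 1)) {b : ℂ} (hb : ‖b‖ < 1) (hz : ‖z‖ < 1) :
    ‖mobius (F b) (F z)‖ ≤ ‖mobius b z‖ := by
  have hFb : ‖F b‖ < 1 := mem_ball_zero_iff.mp (hFm (mem_ball_zero_iff.mpr hb))
  exact norm_le_norm_mobius_of_apply_eq_zero ((differentiableOn_mobius hFb).comp hF hFm)
    ((mapsTo_mobius hFb).comp hFm) hb (by simp) hz

lemma le_one_sub_norm_mobius (ha : ‖a‖ < 1) (hz : ‖z‖ < 1) :
    (1 - ‖a‖ ^ 2) * (1 - ‖z‖) / 8 ≤ 1 - ‖mobius a z‖ := by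
  have hd : 0 < ‖1 - conj a * z‖ := norm_pos_iff.mpr (one_sub_conj_mul_ne_zero ha hz.le)
  have hd2 : ‖1 - conj a * z‖ ≤ 2 := by
    calc ‖1 - conj a * z‖ ≤ ‖(1 : ℂ)‖ + ‖conj a‖ * ‖z‖ :=
          (norm_sub_le _ _).trans_eq (by rw [norm_mul])
      _ ≤ 2 := by rw [norm_one, norm_conj]; nlinarith [norm_nonneg a, norm_nonneg z]
  have ha2 : 0 ≤ 1 - ‖a‖ ^ 2 := by nlinarith [norm_nonneg a]
  have hsq : (1 - ‖a‖ ^ 2) * (1 - ‖z‖) / 4 ≤ 1 - ‖mobius a z‖ ^ 2 := by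
    rw [one_sub_sq_norm_mobius ha hz, div_le_div_iff₀ (by norm_num) (by positivity)]
    have : 1 - ‖z‖ ≤ 1 - ‖z‖ ^ 2 := by nlinarith [norm_nonneg z]
    have : ‖1 - conj a * z‖ ^ 2 ≤ 4 := by nlinarith
    nlinarith [mul_nonneg ha2 (sub_nonneg.mpr hz.le)]
  nlinarith [norm_nonneg (mobius a z), norm_mobius_lt_one ha hz]

end Mobius

lemma norm_sub_div_add_conj_lt_one {P a : ℂ} (hP : 0 < P.re) (ha : 0 < a.re) :
    ‖(P - a) / (P + conj a)‖ < 1 := by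
  have hden : 0 < ‖P + conj a‖ := norm_pos_iff.mpr fun h => by
    have := congrArg re h
    simp only [add_re, conj_re, zero_re] at this
    linarith
  rw [norm_div, div_lt_one hden, ← sq_lt_sq₀ (norm_nonneg _) hden.le, Complex.sq_norm,
    Complex.sq_norm]
  simp only [normSq_apply, add_re, add_im, sub_re, sub_im, conj_re, conj_im]
  nlinarith [mul_pos hP ha]

section Harnack

variable {P : ℂ → ℂ} {w z : ℂ}

lemma norm_mul_one_sub_norm_mobius_le_of_re_pos (hP : DifferentiableOn ℂ P (ball 0 1))
    (hre : ∀ z ∈ ball 0 1, 0 < (P z).re) (hw : ‖w‖ < 1) (hz : ‖z‖ < 1) :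
    ‖P w‖ * (1 - ‖mobius w z‖) ≤ 2 * ‖P z‖ := by
  set a := P w
  have ha : 0 < a.re := hre w (mem_ball_zero_iff.mpr hw)
  have hden : ∀ z ∈ ball (0 : ℂ) 1, P z + conj a ≠ 0 := fun z hz h => by
    have := congrArg re h
    simp only [add_re, conj_re, zero_re] at this
    linarith [hre z hz]
  -- `q` is a Cayley transform of `P` onto the disk, vanishing at `w`.
  set q : ℂ → ℂ := fun z => (P z - a) / (P z + conj a)
  have hq : DifferentiableOn ℂ q (ball 0 1) := (hP.sub_const a).div (hP.add_const _) hden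
  have hqm : MapsTo q (ball 0 1) (ball 0 1) := fun z hz =>
    mem_ball_zero_iff.mpr (norm_sub_div_add_conj_lt_one (hre z hz) ha)
  have hzD : z ∈ ball (0 : ℂ) 1 := mem_ball_zero_iff.mpr hz
  have hqz : ‖q z‖ < 1 := mem_ball_zero_iff.mp (hqm hzD)
  have hschwarz : ‖q z‖ ≤ ‖mobius w z‖ :=
    norm_le_norm_mobius_of_apply_eq_zero hq hqm hw (by simp [q, a]) hz
  have hinv : P z * (1 - q z) = a + conj a * q z := by
    have := hden z hzD
    simp only [q]
    field_simp
    ring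
  calc ‖a‖ * (1 - ‖mobius w z‖) ≤ ‖a‖ * (1 - ‖q z‖) := by gcongr
    _ = ‖a‖ - ‖conj a * q z‖ := by rw [norm_mul, norm_conj]; ring
    _ ≤ ‖a + conj a * q z‖ := norm_sub_le_norm_add _ _
    _ = ‖P z‖ * ‖1 - q z‖ := by rw [← hinv, norm_mul]
    _ ≤ ‖P z‖ * 2 := by
        gcongr
        linarith [norm_sub_le (1 : ℂ) (q z), norm_one (α := ℂ)]
    _ = 2 * ‖P z‖ := mul_comm _ _

/-- A Harnack-type inequality for holomorphic functions with nonnegative real part. -/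
lemma norm_mul_one_sub_norm_mobius_le (hP : DifferentiableOn ℂ P (ball 0 1))
    (hre : ∀ z ∈ ball 0 1, 0 ≤ (P z).re) (hw : ‖w‖ < 1) (hz : ‖z‖ < 1) :
    ‖P w‖ * (1 - ‖mobius w z‖) ≤ 2 * ‖P z‖ := by
  have hshift : ∀ ε : ℝ, 0 < ε → ‖P w + ε‖ * (1 - ‖mobius w z‖) ≤ 2 * ‖P z + ε‖ :=
    fun ε hε => norm_mul_one_sub_norm_mobius_le_of_re_pos (P := fun z => P z + ε)
      (hP.add_const _) (fun z hz => by simpa using add_pos_of_nonneg_of_pos (hre z hz) hε) hw hz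
  have hlim : ∀ c : ℂ, Tendsto (fun ε : ℝ => ‖c + ε‖) (𝓝[>] 0) (𝓝 ‖c‖) := fun c => by
    simpa using ((continuous_const.add continuous_ofReal).norm.tendsto 0).mono_left
      (nhdsWithin_le_nhds (s := Ioi 0))
  exact le_of_tendsto_of_tendsto ((hlim _).mul_const _) ((hlim _).const_mul 2)
    (eventually_nhdsWithin_of_forall hshift)

theorem eq_zero_of_re_nonneg_of_isLittleO (hP : DifferentiableOn ℂ P (ball 0 1))
    (hre : ∀ z ∈ ball 0 1, 0 ≤ (P z).re) {τ : ℂ} (hτ : ‖τ‖ ≤ 1)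
    (hdecay : (fun r : ℝ => P (r * τ)) =o[𝓝[<] 1] fun r => 1 - r) (hw : w ∈ ball 0 1) :
    P w = 0 := by
  by_contra hne
  have hw' := mem_ball_zero_iff.mp hw
  set c := ‖P w‖ * (1 - ‖w‖ ^ 2) / 8
  have hc : 0 < c := by
    have := norm_pos_iff.mpr hne
    have : 0 < 1 - ‖w‖ ^ 2 := by nlinarith [norm_nonneg w]
    positivity
  have hlower : ∀ r ∈ Ioo (0 : ℝ) 1, c * (1 - r) ≤ 2 * ‖P (r * τ)‖ := fun r hr => by
    have hrτ : ‖(r : ℂ) * τ‖ ≤ r := by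
      rw [norm_mul, norm_real, Real.norm_of_nonneg hr.1.le]
      exact mul_le_of_le_one_right hr.1.le hτ
    have hrτ1 : ‖(r : ℂ) * τ‖ < 1 := hrτ.trans_lt hr.2
    calc c * (1 - r) ≤ ‖P w‖ * ((1 - ‖w‖ ^ 2) * (1 - ‖(r : ℂ) * τ‖) / 8) := by
          simp only [c]
          have : 0 ≤ 1 - ‖w‖ ^ 2 := by nlinarith [norm_nonneg w]
          have : 0 ≤ ‖P w‖ * (1 - ‖w‖ ^ 2) := by positivity
          nlinarith
      _ ≤ ‖P w‖ * (1 - ‖mobius w (r * τ)‖) := by gcongr; exact le_one_sub_norm_mobius hw' hrτ1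
      _ ≤ 2 * ‖P (r * τ)‖ := norm_mul_one_sub_norm_mobius_le hP hre hw' hrτ1
  obtain ⟨r, hr, hsmall⟩ :=
    (Eventually.and (Ioo_mem_nhdsLT one_pos) (hdecay.def (c := c / 4) (by positivity))).exists
  rw [Real.norm_of_nonneg (sub_nonneg.mpr hr.2.le)] at hsmall
  nlinarith [hlower r hr, mul_pos hc (sub_pos.mpr hr.2)]

end Harnack

lemma norm_one_sub_conj_mul {τ : ℂ} (hτ : ‖τ‖ = 1) (w : ℂ) : ‖1 - conj τ * w‖ = ‖τ - w‖ := by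
  have hττ : τ * conj τ = 1 := by
    rw [mul_conj, normSq_eq_norm_sq, hτ, one_pow, ofReal_one]
  rw [show τ - w = τ * (1 - conj τ * w) by linear_combination w * hττ, norm_mul, hτ, one_mul]

/-- **Julia's lemma**; the superlevel sets of `(1 - ‖z‖²) / ‖τ - z‖²` are the horodisks at `τ`. -/
theorem julia {F : ℂ → ℂ} (hF : DifferentiableOn ℂ F (ball 0 1))
    (hFm : MapsTo F (ball 0 1) (ball 0 1)) {ι : Type*} {l : Filter ι} [l.NeBot] {b : ι → ℂ}
    {τ σ : ℂ} {c : ℝ} (hτ : ‖τ‖ = 1) (hσ : ‖σ‖ = 1) (hb : ∀ᶠ i in l, ‖b i‖ < 1)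
    (hbτ : Tendsto b l (𝓝 τ)) (hFb : Tendsto (fun i => F (b i)) l (𝓝 σ))
    (hratio : Tendsto (fun i => (1 - ‖b i‖ ^ 2) / (1 - ‖F (b i)‖ ^ 2)) l (𝓝 c))
    {z : ℂ} (hz : ‖z‖ < 1) :
    (1 - ‖z‖ ^ 2) / ‖τ - z‖ ^ 2 * c ≤ (1 - ‖F z‖ ^ 2) / ‖σ - F z‖ ^ 2 := by
  have hFD : ∀ {x : ℂ}, ‖x‖ < 1 → ‖F x‖ < 1 := fun hx =>
    mem_ball_zero_iff.mp (hFm (mem_ball_zero_iff.mpr hx))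
  have hlimit : ∀ {u : ι → ℂ} {μ : ℂ}, ‖μ‖ = 1 → Tendsto u l (𝓝 μ) → ∀ {x : ℂ}, ‖x‖ < 1 →
      Tendsto (fun i => (1 - ‖x‖ ^ 2) / ‖1 - conj (u i) * x‖ ^ 2) l
        (𝓝 ((1 - ‖x‖ ^ 2) / ‖μ - x‖ ^ 2)) := fun hμ hu x hx => by
    rw [← norm_one_sub_conj_mul hμ]
    refine tendsto_const_nhds.div
      ((((continuous_const.sub (continuous_conj.mul continuous_const)).norm.pow 2).tendsto _).comp
        hu) ?_
    rw [norm_one_sub_conj_mul hμ]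
    exact pow_ne_zero 2 (norm_ne_zero_iff.mpr
      (sub_ne_zero.mpr (ne_of_apply_ne norm (hx.trans_eq hμ.symm).ne).symm))
  refine le_of_tendsto_of_tendsto ((hlimit hτ hbτ hz).mul hratio) (hlimit hσ hFb (hFD hz)) ?_
  filter_upwards [hb] with i hbi
  have hFbi := hFD hbi
  have hpick : 1 - ‖mobius (b i) z‖ ^ 2 ≤ 1 - ‖mobius (F (b i)) (F z)‖ ^ 2 := by
    have := norm_mobius_apply_le hF hFm hbi hz
    nlinarith [norm_nonneg (mobius (F (b i)) (F z))]
  rw [one_sub_sq_norm_mobius hbi hz, one_sub_sq_norm_mobius hFbi (hFD hz)] at hpick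
  have : 0 < 1 - ‖F (b i)‖ ^ 2 := by nlinarith [norm_nonneg (F (b i))]
  calc (1 - ‖z‖ ^ 2) / ‖1 - conj (b i) * z‖ ^ 2 * ((1 - ‖b i‖ ^ 2) / (1 - ‖F (b i)‖ ^ 2))
      = (1 - ‖b i‖ ^ 2) * (1 - ‖z‖ ^ 2) / ‖1 - conj (b i) * z‖ ^ 2 / (1 - ‖F (b i)‖ ^ 2) := by
        ring
    _ ≤ (1 - ‖F (b i)‖ ^ 2) * (1 - ‖F z‖ ^ 2) / ‖1 - conj (F (b i)) * F z‖ ^ 2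
        / (1 - ‖F (b i)‖ ^ 2) := by gcongr
    _ = (1 - ‖F z‖ ^ 2) / ‖1 - conj (F (b i)) * F z‖ ^ 2 := by field_simp

noncomputable def cayley (τ w : ℂ) : ℂ := (τ + w) / (τ - w)

lemma re_cayley (τ w : ℂ) : (cayley τ w).re = (‖τ‖ ^ 2 - ‖w‖ ^ 2) / ‖τ - w‖ ^ 2 := by
  rw [cayley, div_re, ← add_div, Complex.sq_norm, Complex.sq_norm, Complex.sq_norm]
  congr 1
  simp only [normSq_apply, add_re, add_im, sub_re, sub_im]
  ring

lemma cayley_sub_cayley {τ w₁ w₂ : ℂ} (h₁ : w₁ ≠ τ) (h₂ : w₂ ≠ τ) :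
    cayley τ w₁ - cayley τ w₂ = 2 * τ * (w₁ - w₂) / ((τ - w₁) * (τ - w₂)) := by
  have := sub_ne_zero.mpr h₁.symm
  have := sub_ne_zero.mpr h₂.symm
  rw [cayley, cayley]
  field_simp
  ring

lemma differentiableOn_cayley {τ : ℂ} {s : Set ℂ} (hτ : τ ∉ s) :
    DifferentiableOn ℂ (cayley τ) s :=
  ((differentiableOn_const τ).add differentiableOn_id).div
    ((differentiableOn_const τ).sub differentiableOn_id)
    fun _ hw => sub_ne_zero.mpr fun h => hτ (h ▸ hw)

lemma cayley_inj {τ w₁ w₂ : ℂ} (hτ : τ ≠ 0) (h₁ : w₁ ≠ τ) (h₂ : w₂ ≠ τ) :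
    cayley τ w₁ = cayley τ w₂ ↔ w₁ = w₂ := by
  rw [← sub_eq_zero, cayley_sub_cayley h₁ h₂]
  simp [hτ, sub_eq_zero, h₁.symm, h₂.symm]

section Radial

variable {τ : ℂ}

lemma norm_ofReal_mul_of_norm_eq_one (hτ : ‖τ‖ = 1) {r : ℝ} (hr : 0 ≤ r) :
    ‖(r : ℂ) * τ‖ = r := by
  rw [norm_mul, norm_real, Real.norm_of_nonneg hr, hτ, mul_one]

lemma norm_sub_ofReal_mul (hτ : ‖τ‖ = 1) {r : ℝ} (hr : r ≤ 1) : ‖τ - r * τ‖ = 1 - r := by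
  rw [show τ - r * τ = ((1 - r : ℝ) : ℂ) * τ by push_cast; ring,
    norm_ofReal_mul_of_norm_eq_one hτ (sub_nonneg.mpr hr)]

lemma tendsto_ofReal_mul_nhdsLT (τ : ℂ) :
    Tendsto (fun r : ℝ => (r : ℂ) * τ) (𝓝[<] 1) (𝓝 τ) := by
  have : Continuous fun r : ℝ => (r : ℂ) * τ := by fun_prop
  simpa using (this.tendsto 1).mono_left nhdsWithin_le_nhds

lemma tendsto_ofReal_mul_nontangentialRegion (hτ : ‖τ‖ = 1) {k : ℝ} (hk : 1 < k) :
    Tendsto (fun r : ℝ => (r : ℂ) * τ) (𝓝[<] 1) (𝓝[nontangentialRegion k τ] τ) := by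
  refine tendsto_nhdsWithin_iff.mpr ⟨tendsto_ofReal_mul_nhdsLT τ, ?_⟩
  filter_upwards [Ioo_mem_nhdsLT one_pos] with r hr
  rw [nontangentialRegion, mem_ofPred_eq, norm_sub_rev, norm_sub_ofReal_mul hτ hr.2.le,
    norm_ofReal_mul_of_norm_eq_one hτ hr.1.le]
  exact ⟨hr.2, by nlinarith [sub_pos.mpr hr.2]⟩

lemma AngularLimit.isLittleO_radial {G : ℂ → ℂ} {n : ℕ} (hτ : ‖τ‖ = 1)
    (h : AngularLimit (fun z => G z / (z - τ) ^ n) τ 0) :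
    (fun r : ℝ => G (r * τ)) =o[𝓝[<] 1] fun r => (1 - r) ^ n := by
  have hg : (fun r : ℝ => G (r * τ) / (r * τ - τ) ^ n) =o[𝓝[<] 1] fun _ => (1 : ℝ) :=
    (isLittleO_one_iff ℝ).mpr
      ((h 2 one_lt_two).comp (tendsto_ofReal_mul_nontangentialRegion hτ one_lt_two))
  have hpow : (fun r : ℝ => ((r : ℂ) * τ - τ) ^ n) =O[𝓝[<] 1] fun r => (1 - r) ^ n := by
    refine IsBigO.of_bound' ?_
    filter_upwards [Ioo_mem_nhdsLT one_pos] with r hr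
    rw [norm_pow, norm_sub_rev, norm_sub_ofReal_mul hτ hr.2.le, norm_pow,
      Real.norm_of_nonneg (sub_nonneg.mpr hr.2.le)]
  refine (hg.mul_isBigO hpow).congr' ?_ (Eventually.of_forall fun r => one_mul _)
  filter_upwards [Ioo_mem_nhdsLT one_pos] with r hr
  have hne : (r : ℂ) * τ - τ ≠ 0 := by
    rw [← norm_ne_zero_iff, norm_sub_rev, norm_sub_ofReal_mul hτ hr.2.le]
    exact (sub_pos.mpr hr.2).ne'
  exact div_mul_cancel₀ _ (pow_ne_zero n hne)

lemma isBigO_one_sub_pow {n : ℕ} (hn : n ≠ 0) :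
    (fun r : ℝ => (1 - r) ^ n) =O[𝓝[<] 1] fun r => 1 - r := by
  refine IsBigO.of_bound' ?_
  filter_upwards [Ioo_mem_nhdsLT one_pos] with r hr
  have h0 : 0 ≤ 1 - r := sub_nonneg.mpr hr.2.le
  rw [Real.norm_of_nonneg (pow_nonneg h0 n), Real.norm_of_nonneg h0]
  exact pow_le_of_le_one h0 (by linarith [hr.1]) hn

variable {G : ℂ → ℂ}

lemma tendsto_apply_ofReal_mul_of_isLittleO
    (hδ : (fun r : ℝ => G (r * τ) - r * τ) =o[𝓝[<] 1] fun r => 1 - r) :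
    Tendsto (fun r : ℝ => G (r * τ)) (𝓝[<] 1) (𝓝 τ) := by
  have h1r : Tendsto (fun r : ℝ => 1 - r) (𝓝[<] 1) (𝓝 0) :=
    ((continuous_const.sub continuous_id).tendsto' 1 0 (sub_self 1)).mono_left nhdsWithin_le_nhds
  simpa using (hδ.trans_tendsto h1r).add (tendsto_ofReal_mul_nhdsLT τ)

lemma tendsto_one_sub_sq_norm_div_of_isLittleO (hτ : ‖τ‖ = 1)
    (hδ : (fun r : ℝ => G (r * τ) - r * τ) =o[𝓝[<] 1] fun r => 1 - r) :
    Tendsto (fun r : ℝ => (1 - ‖(r : ℂ) * τ‖ ^ 2) / (1 - ‖G (r * τ)‖ ^ 2)) (𝓝[<] 1) (𝓝 1) := by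
  have hnear : ∀ᶠ r : ℝ in 𝓝[<] 1, r ∈ Ioo 0 1 ∧ |‖G (r * τ)‖ - r| ≤ (1 - r) / 2 := by
    filter_upwards [Ioo_mem_nhdsLT one_pos, hδ.def (c := 1 / 2) one_half_pos] with r hr hδr
    rw [Real.norm_of_nonneg (sub_nonneg.mpr hr.2.le)] at hδr
    refine ⟨hr, ?_⟩
    have := abs_norm_sub_norm_le (G (r * τ)) (r * τ)
    rw [norm_ofReal_mul_of_norm_eq_one hτ hr.1.le] at this
    linarith
  have hdiff : (fun r : ℝ => (1 - ‖G (r * τ)‖ ^ 2) - (1 - ‖(r : ℂ) * τ‖ ^ 2)) =O[𝓝[<] 1]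
      fun r : ℝ => G (r * τ) - r * τ := by
    refine IsBigO.of_bound 3 ?_
    filter_upwards [hnear] with r ⟨hr, hGr⟩
    have hδr := abs_norm_sub_norm_le (G (r * τ)) (r * τ)
    rw [norm_ofReal_mul_of_norm_eq_one hτ hr.1.le] at hδr ⊢
    rw [Real.norm_eq_abs, abs_le]
    have := abs_le.mp hGr
    have := abs_le.mp hδr
    constructor <;> nlinarith [hr.1, hr.2]
  have hlin : (fun r : ℝ => 1 - r) =O[𝓝[<] 1] fun r : ℝ => 1 - ‖(r : ℂ) * τ‖ ^ 2 := by
    refine IsBigO.of_bound' ?_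
    filter_upwards [Ioo_mem_nhdsLT one_pos] with r hr
    rw [norm_ofReal_mul_of_norm_eq_one hτ hr.1.le, Real.norm_of_nonneg (sub_nonneg.mpr hr.2.le),
      Real.norm_of_nonneg (by nlinarith [hr.1, hr.2])]
    nlinarith [hr.1, hr.2]
  have hequiv : (fun r : ℝ => 1 - ‖G (r * τ)‖ ^ 2) ~[𝓝[<] 1]
      fun r : ℝ => 1 - ‖(r : ℂ) * τ‖ ^ 2 := (hdiff.trans_isLittleO hδ).trans_isBigO hlin
  have hne : ∀ᶠ r : ℝ in 𝓝[<] 1, 1 - ‖G (r * τ)‖ ^ 2 ≠ 0 := by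
    filter_upwards [hnear] with r ⟨hr, hGr⟩
    have := abs_le.mp hGr
    nlinarith [norm_nonneg (G (r * τ)), hr.2]
  exact (isEquivalent_iff_tendsto_one hne).mp hequiv.symm

lemma isLittleO_cayley_sub_cayley_of_isLittleO (hτ : ‖τ‖ = 1)
    (hδ : (fun r : ℝ => G (r * τ) - r * τ) =o[𝓝[<] 1] fun r => (1 - r) ^ 3) :
    (fun r : ℝ => cayley τ (G (r * τ)) - cayley τ (r * τ)) =o[𝓝[<] 1] fun r => 1 - r := by
  refine IsLittleO.of_bound fun c hc => ?_
  filter_upwards [Ioo_mem_nhdsLT one_pos,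
    (hδ.trans_isBigO (isBigO_one_sub_pow three_ne_zero)).def (c := 1 / 2) one_half_pos,
    hδ.def (c := c / 4) (by positivity)] with r hr hhalf hcube
  have h1r : 0 < 1 - r := sub_pos.mpr hr.2
  rw [Real.norm_of_nonneg h1r.le] at hhalf ⊢
  rw [Real.norm_of_nonneg (pow_nonneg h1r.le 3)] at hcube
  have hτG : (1 - r) / 2 ≤ ‖τ - G (r * τ)‖ := by
    have := norm_sub_le_norm_sub_add_norm_sub τ (G (r * τ)) (r * τ)
    rw [norm_sub_ofReal_mul hτ hr.2.le] at this
    linarith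
  have hG : G (r * τ) ≠ τ := fun h => by
    rw [h, sub_self, norm_zero] at hτG
    linarith
  have hrτ : (r : ℂ) * τ ≠ τ := ne_of_apply_ne norm <| by
    rw [norm_ofReal_mul_of_norm_eq_one hτ hr.1.le, hτ]
    exact hr.2.ne
  rw [cayley_sub_cayley hG hrτ, norm_div, norm_mul, norm_mul, norm_mul, hτ,
    norm_sub_ofReal_mul hτ hr.2.le, div_le_iff₀ (mul_pos (by linarith) h1r), Complex.norm_ofNat,
    mul_one]
  nlinarith [mul_le_mul_of_nonneg_left hτG (by positivity : 0 ≤ c * (1 - r) ^ 2)]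

end Radial

/-- if `F` is a holomorphic self-map of the open unit disk and for some
`τ` with `|τ| = 1` the angular limit `∠lim_{z→τ} (F z - z)/(z - τ)^3 = 0`, then
`F` is the identity on the disk. -/
theorem burns_krantz_disk_angular (F : ℂ → ℂ)
    (hF : DifferentiableOn ℂ F (ball (0 : ℂ) 1))
    (hFself : Set.MapsTo F (ball (0 : ℂ) 1) (ball (0 : ℂ) 1))
    (τ : ℂ) (hτ : ‖τ‖ = 1)
    (hlim : AngularLimit (fun z : ℂ => (F z - z) / (z - τ) ^ 3) τ 0) :
    ∀ z ∈ ball (0 : ℂ) 1, F z = z := by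
  have hD : ∀ {w : ℂ}, w ∈ ball (0 : ℂ) 1 → w ≠ τ := fun hw =>
    ne_of_apply_ne norm ((mem_ball_zero_iff.mp hw).trans_eq hτ.symm).ne
  have hδ₃ := AngularLimit.isLittleO_radial (G := fun z => F z - z) hτ hlim
  have hδ := hδ₃.trans_isBigO (isBigO_one_sub_pow three_ne_zero)
  have hjulia : ∀ z ∈ ball (0 : ℂ) 1, (cayley τ z).re ≤ (cayley τ (F z)).re := fun z hz => by
    have hradial : ∀ᶠ r : ℝ in 𝓝[<] 1, ‖(r : ℂ) * τ‖ < 1 :=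
      (tendsto_nhdsWithin_iff.mp (tendsto_ofReal_mul_nontangentialRegion hτ one_lt_two)).2.mono
        fun _ hr => hr.1
    simpa [re_cayley, hτ] using julia hF hFself hτ hτ hradial (tendsto_ofReal_mul_nhdsLT τ)
      (tendsto_apply_ofReal_mul_of_isLittleO hδ) (tendsto_one_sub_sq_norm_div_of_isLittleO hτ hδ)
      (mem_ball_zero_iff.mp hz)
  have hτD : τ ∉ ball (0 : ℂ) 1 := fun h => hD h rfl
  have hp : DifferentiableOn ℂ (fun z => cayley τ (F z) - cayley τ z) (ball 0 1) :=
    ((differentiableOn_cayley hτD).comp hF hFself).sub (differentiableOn_cayley hτD)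
  have hpre : ∀ z ∈ ball (0 : ℂ) 1, 0 ≤ (cayley τ (F z) - cayley τ z).re := fun z hz => by
    simpa using hjulia z hz
  intro z hz
  have hpz := eq_zero_of_re_nonneg_of_isLittleO hp hpre hτ.le
    (isLittleO_cayley_sub_cayley_of_isLittleO hτ hδ₃) hz
  exact (cayley_inj (norm_ne_zero_iff.mp (hτ ▸ one_ne_zero)) (hD (hFself hz)) (hD hz)).mp
    (sub_eq_zero.mp hpz)
end

section
/- Let p : Δ → ℂ be holomorphic with Re p(z) ≥ 0 for all z ∈ Δ. Then both g(z) = −(1 − z)²·p(z) and g₁(z) = z·p(z) are infinitesimal generators of one-parameter continuous semigroups of holomorphic self-maps of Δ. -/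
open Filter Metric

/-- `g : ℂ → ℂ` is the infinitesimal generator of a one-parameter continuous
semigroup of holomorphic self-maps of the open unit disk `Δ = ball 0 1`. -/
def IsGenOnDisk (g : ℂ → ℂ) : Prop :=
  ∃ F : ℝ → ℂ → ℂ,
    (∀ t : ℝ, 0 ≤ t → DifferentiableOn ℂ (F t) (ball (0 : ℂ) 1) ∧
      Set.MapsTo (F t) (ball (0 : ℂ) 1) (ball (0 : ℂ) 1)) ∧
    (∀ t s : ℝ, 0 ≤ t → 0 ≤ s → ∀ z ∈ ball (0 : ℂ) 1, F (t + s) z = F t (F s z)) ∧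
    (∀ z ∈ ball (0 : ℂ) 1,
      Tendsto (fun t : ℝ => F t z) (nhdsWithin 0 (Set.Ioi 0)) (nhds z)) ∧
    (∀ z ∈ ball (0 : ℂ) 1,
      Tendsto (fun t : ℝ => (z - F t z) / (t : ℂ)) (nhdsWithin 0 (Set.Ioi 0)) (nhds (g z)))

/-!
Both fields are `-G` for a `G` holomorphic on the disk with `2 ⟪w, G w⟫ ≤ c (1 - ‖w‖²)`. For
`G = -z p` this holds with `c = 0` since `Re p ≥ 0`. For `G = (1 - z)² p`, subtract an imaginary
constant so that `p 0 = a` is real; the Schwarz lemma for the Cayley transform `(p - a) / (p + a)`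
gives `(1 - ‖z‖²) ‖p z‖² ≤ 4 a Re p z`, which by AM-GM yields the bound.

Along a solution of `y' = G y` the bound makes `(1 - ‖y‖²) e^{ct}` nondecreasing, so solutions
starting in `ball 0 r`, `r < 1`, stay in a fixed smaller disk up to any time `S`. There `G` is
bounded and Lipschitz, so Picard iteration, whose iterates are holomorphic in the initial point,
runs with a fixed time step and can be restarted up to time `S`. This gives a flow of holomorphic
self-maps of the disk; uniqueness of solutions gives the semigroup law, and `-G` is the generator
because the flow has time derivative `G z` at `t = 0`.
-/

open Set MeasureTheory intervalIntegral Topology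
open scoped NNReal ComplexConjugate RealInnerProductSpace

section Calculus

variable {E : Type*} [NormedAddCommGroup E] [NormedSpace ℝ E]

theorem ContinuousOn.hasDerivWithinAt_integral_Icc [CompleteSpace E] {f : ℝ → E} {a b t : ℝ}
    (hf : ContinuousOn f (Icc a b)) (ht : t ∈ Icc a b) :
    HasDerivWithinAt (fun u => ∫ s in a..u, f s) (f t) (Icc a b) t := by
  have : Fact (t ∈ Icc a b) := ⟨ht⟩
  refine integral_hasDerivWithinAt_right ?_ (hf.stronglyMeasurableAtFilter_nhdsWithin
    measurableSet_Icc t) (hf t ht)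
  exact (hf.mono (uIcc_subset_Icc (left_mem_Icc.2 (ht.1.trans ht.2)) ht)).intervalIntegrable

theorem LipschitzOnWith.norm_integral_comp_sub_le {F : Type*} [NormedAddCommGroup F]
    {G : F → E} {K : Set F} {L : ℝ≥0} (hG : LipschitzOnWith L G K) {γ₁ γ₂ : ℝ → F} {t C : ℝ}
    (ht : 0 ≤ t) (h₁ : ContinuousOn γ₁ (Icc 0 t)) (h₂ : ContinuousOn γ₂ (Icc 0 t))
    (hK₁ : MapsTo γ₁ (Icc 0 t) K) (hK₂ : MapsTo γ₂ (Icc 0 t) K)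
    (hC : ∀ s ∈ Icc 0 t, ‖γ₁ s - γ₂ s‖ ≤ C) :
    ‖(∫ s in (0:ℝ)..t, G (γ₁ s)) - ∫ s in (0:ℝ)..t, G (γ₂ s)‖ ≤ L * C * t := by
  have hint : ∀ γ : ℝ → F, ContinuousOn γ (Icc 0 t) → MapsTo γ (Icc 0 t) K →
      IntervalIntegrable (fun s => G (γ s)) volume 0 t := fun γ hγ hγK =>
    (hG.continuousOn.comp hγ hγK).intervalIntegrable_of_Icc ht
  rw [← integral_sub (hint γ₁ h₁ hK₁) (hint γ₂ h₂ hK₂)]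
  refine (intervalIntegral.norm_integral_le_of_norm_le_const fun s hs => ?_).trans_eq
    (by rw [sub_zero, abs_of_nonneg ht])
  rw [uIoc_of_le ht] at hs
  have hs' : s ∈ Icc 0 t := Ioc_subset_Icc_self hs
  rw [← dist_eq_norm]
  exact (hG.dist_le_mul _ (hK₁ hs') _ (hK₂ hs')).trans
    (mul_le_mul_of_nonneg_left ((dist_eq_norm (γ₁ s) (γ₂ s)).trans_le (hC s hs')) L.coe_nonneg)

theorem tendsto_sub_div_of_hasDerivWithinAt {f : ℝ → ℂ} {f' : ℂ}
    (h : HasDerivWithinAt f f' (Ioi 0) 0) :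
    Tendsto (fun t : ℝ => (f 0 - f t) / (t : ℂ)) (𝓝[>] 0) (𝓝 (-f')) := by
  refine ((hasDerivWithinAt_iff_tendsto_slope' (lt_irrefl 0)).1 h).neg.congr fun t => ?_
  rw [slope_def_module, sub_zero, Complex.real_smul, Complex.ofReal_inv]
  ring

theorem tendstoUniformlyOn_of_dist_le_geometric {α β : Type*} [PseudoMetricSpace β]
    {F : ℕ → α → β} {f : α → β} {s : Set α} {C r : ℝ} (hr₀ : 0 ≤ r) (hr : r < 1)
    (h : ∀ n, ∀ x ∈ s, dist (F n x) (f x) ≤ C * r ^ n) : TendstoUniformlyOn F f atTop s := by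
  refine Metric.tendstoUniformlyOn_iff.2 fun ε hε => ?_
  have hC : Tendsto (fun n => C * r ^ n) atTop (𝓝 0) := by
    simpa using (tendsto_pow_atTop_nhds_zero_of_lt_one hr₀ hr).const_mul C
  filter_upwards [hC.eventually (gt_mem_nhds hε)] with n hn x hx
  rw [dist_comm]
  exact (h n x hx).trans_lt hn

end Calculus

namespace DiskFlow

structure IsDiskSolution (G : ℂ → ℂ) (z : ℂ) (y : ℝ → ℂ) (b : ℝ) : Prop where
  continuousOn : ContinuousOn y (Icc 0 b)
  mapsTo : MapsTo y (Icc 0 b) (ball 0 1)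
  eq_integral : ∀ t ∈ Icc 0 b, y t = z + ∫ s in (0:ℝ)..t, G (y s)

def LyapunovBound (G : ℂ → ℂ) (c : ℝ) : Prop :=
  ∀ w ∈ ball (0:ℂ) 1, 2 * ⟪w, G w⟫ ≤ c * (1 - ‖w‖ ^ 2)

noncomputable def lyapunovRadius (c r S : ℝ) : ℝ :=
  √(1 - (1 - r ^ 2) * Real.exp (-(c * S)))

theorem lyapunovRadius_lt_one {c r S : ℝ} (hr₀ : 0 ≤ r) (hr : r < 1) :
    lyapunovRadius c r S < 1 := by
  have : 0 < (1 - r ^ 2) * Real.exp (-(c * S)) := mul_pos (by nlinarith) (Real.exp_pos _)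
  rw [lyapunovRadius, Real.sqrt_lt' one_pos]
  linarith

theorem exists_lipschitzOnWith_closedBall {G : ℂ → ℂ} (hG : DifferentiableOn ℂ G (ball 0 1))
    {r : ℝ} (hr : r < 1) : ∃ L, LipschitzOnWith L G (closedBall 0 r) :=
  (((hG.contDiffOn (n := 1) isOpen_ball).restrict_scalars ℝ).mono
    (closedBall_subset_ball hr)).exists_lipschitzOnWith one_ne_zero (convex_closedBall 0 r)
    (isCompact_closedBall 0 r)

namespace IsDiskSolution

variable {G : ℂ → ℂ} {c : ℝ} {z : ℂ} {y y₁ y₂ : ℝ → ℂ} {b : ℝ}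

theorem apply_zero (h : IsDiskSolution G z y b) (hb : 0 ≤ b) : y 0 = z := by
  simpa using h.eq_integral 0 ⟨le_rfl, hb⟩

theorem continuousOn_comp (hGc : ContinuousOn G (ball 0 1)) (h : IsDiskSolution G z y b) :
    ContinuousOn (fun s => G (y s)) (Icc 0 b) :=
  hGc.comp h.continuousOn h.mapsTo

theorem intervalIntegrable (hGc : ContinuousOn G (ball 0 1)) (h : IsDiskSolution G z y b)
    {u v : ℝ} (huv : uIcc u v ⊆ Icc 0 b) :
    IntervalIntegrable (fun s => G (y s)) volume u v :=
  ((h.continuousOn_comp hGc).mono huv).intervalIntegrable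

theorem hasDerivWithinAt (hGc : ContinuousOn G (ball 0 1)) (h : IsDiskSolution G z y b)
    {t : ℝ} (ht : t ∈ Icc 0 b) : HasDerivWithinAt y (G (y t)) (Icc 0 b) t :=
  (((h.continuousOn_comp hGc).hasDerivWithinAt_integral_Icc ht).const_add z).congr
    h.eq_integral (h.eq_integral t ht)

theorem mono (h : IsDiskSolution G z y b) {b' : ℝ} (hb' : b' ≤ b) : IsDiskSolution G z y b' :=
  have hsub : Icc 0 b' ⊆ Icc 0 b := Icc_subset_Icc le_rfl hb'
  ⟨h.continuousOn.mono hsub, h.mapsTo.mono_left hsub, fun t ht => h.eq_integral t (hsub ht)⟩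

theorem congr (h : IsDiskSolution G z y b) {y' : ℝ → ℂ} (hyy' : EqOn y y' (Icc 0 b)) :
    IsDiskSolution G z y' b := by
  refine ⟨h.continuousOn.congr hyy'.symm, fun t ht => hyy' ht ▸ h.mapsTo ht, fun t ht => ?_⟩
  rw [← hyy' ht, h.eq_integral t ht]
  congr 1
  refine integral_congr fun s hs => ?_
  rw [uIcc_of_le ht.1] at hs
  simp only [hyy' (Icc_subset_Icc le_rfl ht.2 hs)]

theorem shift (hGc : ContinuousOn G (ball 0 1)) (h : IsDiskSolution G z y b) {s t : ℝ}
    (hs : 0 ≤ s) (hst : s + t ≤ b) : IsDiskSolution G (y s) (fun u => y (u + s)) t := by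
  have hmem : ∀ u ∈ Icc 0 t, u + s ∈ Icc 0 b := fun u hu =>
    ⟨by linarith [hu.1], by linarith [hu.2]⟩
  refine ⟨h.continuousOn.comp (by fun_prop) hmem, h.mapsTo.comp hmem, fun u hu => ?_⟩
  have hsb : s ∈ Icc 0 b := ⟨hs, by linarith [hu.1, hu.2]⟩
  rw [h.eq_integral _ (hmem u hu), h.eq_integral s hsb, integral_comp_add_right
    (fun σ => G (y σ)), zero_add, add_assoc, integral_add_adjacent_intervals]
  · exact h.intervalIntegrable hGc (uIcc_subset_Icc ⟨le_rfl, hsb.1.trans hsb.2⟩ hsb)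
  · exact h.intervalIntegrable hGc (uIcc_subset_Icc hsb (hmem u hu))

theorem append (hGc : ContinuousOn G (ball 0 1)) (h₁ : IsDiskSolution G z y b) {h : ℝ}
    (h₂ : IsDiskSolution G (y b) (fun u => y (u + b)) h) (hb : 0 ≤ b) (hh : 0 ≤ h) :
    IsDiskSolution G z y (b + h) := by
  have hsub : ∀ t ∈ Icc b (b + h), t - b ∈ Icc 0 h := fun t ht =>
    ⟨by linarith [ht.1], by linarith [ht.2]⟩
  have hsplit : Icc 0 (b + h) = Icc 0 b ∪ Icc b (b + h) :=
    (Icc_union_Icc_eq_Icc hb (by linarith)).symm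
  have hcont : ContinuousOn y (Icc 0 (b + h)) := by
    rw [hsplit, continuousOn_union_iff_of_isClosed isClosed_Icc isClosed_Icc]
    exact ⟨h₁.continuousOn, (h₂.continuousOn.comp (continuous_sub_right b).continuousOn
      hsub).congr fun t _ => by simp⟩
  have hmaps : MapsTo y (Icc 0 (b + h)) (ball 0 1) := by
    rw [hsplit]
    rintro t (ht | ht)
    · exact h₁.mapsTo ht
    · simpa using h₂.mapsTo (hsub t ht)
  refine ⟨hcont, hmaps, fun t ht => ?_⟩
  rcases le_or_gt t b with htb | htb
  · exact h₁.eq_integral t ⟨ht.1, htb⟩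
  have hint : ∀ {u v : ℝ}, uIcc u v ⊆ Icc 0 (b + h) →
      IntervalIntegrable (fun s => G (y s)) volume u v := fun huv =>
    ((hGc.comp hcont hmaps).mono huv).intervalIntegrable
  have := h₂.eq_integral (t - b) (hsub t ⟨htb.le, ht.2⟩)
  rwa [sub_add_cancel, integral_comp_add_right (fun s => G (y s)), zero_add, sub_add_cancel,
    h₁.eq_integral b ⟨hb, le_rfl⟩, add_assoc, integral_add_adjacent_intervals
      (hint (uIcc_subset_Icc ⟨le_rfl, by linarith⟩ ⟨hb, by linarith⟩))
      (hint (uIcc_subset_Icc ⟨hb, by linarith⟩ ht))] at this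

theorem glue (hGc : ContinuousOn G (ball 0 1)) {τ h : ℝ} {y₂ : ℝ → ℂ}
    (h₁ : IsDiskSolution G z y τ) (h₂ : IsDiskSolution G (y τ) y₂ h) (hτ : 0 ≤ τ) (hh : 0 ≤ h) :
    IsDiskSolution G z (fun t => if t ≤ τ then y t else y₂ (t - τ)) (τ + h) := by
  refine append hGc (h₁.congr fun t ht => (if_pos ht.2).symm) ?_ hτ hh
  simp only [le_refl, if_true]
  refine h₂.congr fun u hu => ?_
  rcases hu.1.eq_or_lt with rfl | hu0
  · simp [h₂.apply_zero hh]
  · simp [hu0]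

theorem one_sub_sq_norm_mul_exp_le (hGc : ContinuousOn G (ball 0 1)) (hL : LyapunovBound G c)
    (h : IsDiskSolution G z y b) {t : ℝ} (ht : t ∈ Icc 0 b) :
    (1 - ‖z‖ ^ 2) * Real.exp (-(c * t)) ≤ 1 - ‖y t‖ ^ 2 := by
  set u : ℝ → ℝ := fun t => (1 - ‖y t‖ ^ 2) * Real.exp (c * t)
  have hu : ∀ s ∈ Icc 0 b, HasDerivWithinAt u (-(2 * ⟪y s, G (y s)⟫) * Real.exp (c * s) +
      (1 - ‖y s‖ ^ 2) * (Real.exp (c * s) * c)) (Icc 0 b) s := fun s hs =>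
    ((h.hasDerivWithinAt hGc hs).norm_sq.const_sub 1).mul
      (((hasDerivAt_id s).const_mul c).exp.hasDerivWithinAt.congr_deriv (by simp))
  have hmono : MonotoneOn u (Icc 0 b) :=
    monotoneOn_of_hasDerivWithinAt_nonneg (convex_Icc 0 b)
      (fun s hs => (hu s hs).continuousWithinAt)
      (fun s hs => (hu s (interior_subset hs)).mono interior_subset) fun s hs => by
        have := hL _ (h.mapsTo (interior_subset hs))
        nlinarith [Real.exp_pos (c * s)]
  have hb : 0 ≤ b := ht.1.trans ht.2
  have h0t := hmono ⟨le_rfl, hb⟩ ht ht.1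
  simp only [u, h.apply_zero hb, mul_zero, Real.exp_zero, mul_one] at h0t
  calc (1 - ‖z‖ ^ 2) * Real.exp (-(c * t))
      ≤ (1 - ‖y t‖ ^ 2) * Real.exp (c * t) * Real.exp (-(c * t)) :=
        mul_le_mul_of_nonneg_right h0t (Real.exp_pos _).le
    _ = 1 - ‖y t‖ ^ 2 := by rw [mul_assoc, ← Real.exp_add]; simp

theorem norm_le_lyapunovRadius (hGc : ContinuousOn G (ball 0 1)) {r S : ℝ} (hc : 0 ≤ c)
    (hL : LyapunovBound G c) (h : IsDiskSolution G z y b) (hzr : ‖z‖ ≤ r) (hbS : b ≤ S)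
    {t : ℝ} (ht : t ∈ Icc 0 b) : ‖y t‖ ≤ lyapunovRadius c r S := by
  have hb : 0 ≤ b := ht.1.trans ht.2
  have hz : ‖z‖ < 1 := by simpa [h.apply_zero hb] using h.mapsTo ⟨le_rfl, hb⟩
  have hdecay := h.one_sub_sq_norm_mul_exp_le hGc hL ht
  have hexp : Real.exp (-(c * S)) ≤ Real.exp (-(c * t)) :=
    Real.exp_le_exp.2 (by nlinarith [ht.2])
  rw [← abs_norm]
  refine Real.abs_le_sqrt ?_
  have hz2 : 0 ≤ 1 - ‖z‖ ^ 2 := by nlinarith [norm_nonneg z]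
  have hzr2 : ‖z‖ ^ 2 ≤ r ^ 2 := pow_le_pow_left₀ (norm_nonneg z) hzr 2
  nlinarith [mul_le_mul_of_nonneg_left hexp hz2, Real.exp_pos (-(c * S))]

theorem eqOn (hG : DifferentiableOn ℂ G (ball 0 1)) (hc : 0 ≤ c) (hL : LyapunovBound G c)
    (h₁ : IsDiskSolution G z y₁ b) (h₂ : IsDiskSolution G z y₂ b) : EqOn y₁ y₂ (Icc 0 b) := by
  rcases lt_or_ge b 0 with hb | hb
  · simp [Icc_eq_empty_of_lt hb]
  have hz : ‖z‖ < 1 := by simpa [h₁.apply_zero hb] using h₁.mapsTo ⟨le_rfl, hb⟩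
  set R := lyapunovRadius c ‖z‖ b
  obtain ⟨L, hLip⟩ :=
    exists_lipschitzOnWith_closedBall hG (lyapunovRadius_lt_one (norm_nonneg z) hz)
  have hmem : ∀ {y}, IsDiskSolution G z y b → ∀ t ∈ Ico 0 b, y t ∈ closedBall 0 R :=
    fun h t ht => mem_closedBall_zero_iff.2 <|
      h.norm_le_lyapunovRadius hG.continuousOn hc hL le_rfl le_rfl (Ico_subset_Icc_self ht)
  have hderiv : ∀ {y}, IsDiskSolution G z y b →
      ∀ t ∈ Ico 0 b, HasDerivWithinAt y (G (y t)) (Ici t) t := fun h t ht =>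
    (h.hasDerivWithinAt hG.continuousOn (Ico_subset_Icc_self ht)).mono_of_mem_nhdsWithin
      (Icc_mem_nhdsGE_of_mem ht)
  exact ODE_solution_unique_of_mem_Icc_right (v := fun _ => G) (s := fun _ => closedBall 0 R)
    (fun _ _ => hLip) h₁.continuousOn (hderiv h₁) (hmem h₁) h₂.continuousOn (hderiv h₂)
    (hmem h₂) (by rw [h₁.apply_zero hb, h₂.apply_zero hb])

theorem eq_of_le (hG : DifferentiableOn ℂ G (ball 0 1)) (hc : 0 ≤ c) (hL : LyapunovBound G c)
    {b₂ : ℝ} (h₁ : IsDiskSolution G z y₁ b) (h₂ : IsDiskSolution G z y₂ b₂) {t : ℝ}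
    (ht : t ∈ Icc 0 b) (htb₂ : t ≤ b₂) : y₁ t = y₂ t :=
  eqOn hG hc hL (h₁.mono ht.2) (h₂.mono htb₂) ⟨ht.1, le_rfl⟩

end IsDiskSolution

structure PicardBounds (G : ℂ → ℂ) (ρ ρ' M : ℝ) (L : ℝ≥0) (T : ℝ) : Prop where
  differentiableOn : DifferentiableOn ℂ G (ball 0 1)
  lt_one : ρ' < 1
  norm_le : ∀ w ∈ closedBall (0:ℂ) ρ', ‖G w‖ ≤ M
  lipschitzOnWith : LipschitzOnWith L G (closedBall 0 ρ')
  nonneg : 0 ≤ M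
  mul_le : M * T ≤ ρ' - ρ
  lipschitz_mul_le : L * T ≤ 1 / 2

noncomputable def picardStep (G : ℂ → ℂ) (Φ : ℝ → ℂ → ℂ) (t : ℝ) (z : ℂ) : ℂ :=
  z + ∫ s in (0:ℝ)..t, G (Φ s z)

noncomputable def picardIter (G : ℂ → ℂ) : ℕ → ℝ → ℂ → ℂ
  | 0 => fun _ z => z
  | n + 1 => picardStep G (picardIter G n)

/-- The Lipschitz bound in `z` (constant `2` because `L * T ≤ 1 / 2`) and a derivative in `z`
that is continuous in `t` are what allow differentiating the next iterate under the integral. -/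
structure PicardInvariant (Φ : ℝ → ℂ → ℂ) (ρ M T : ℝ) : Prop where
  continuousOn : ∀ z ∈ ball (0:ℂ) ρ, ContinuousOn (Φ · z) (Icc 0 T)
  norm_sub_le : ∀ z ∈ ball (0:ℂ) ρ, ∀ t ∈ Icc 0 T, ‖Φ t z - z‖ ≤ M * t
  lipschitzOnWith : ∀ t ∈ Icc 0 T, LipschitzOnWith 2 (Φ t) (ball 0 ρ)
  hasDerivAt : ∀ z ∈ ball (0:ℂ) ρ, ∃ D : ℝ → ℂ, ContinuousOn D (Icc 0 T) ∧
    ∀ t ∈ Icc 0 T, HasDerivAt (Φ t) (D t) z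

variable {G : ℂ → ℂ} {ρ ρ' M T : ℝ} {L : ℝ≥0} {Φ : ℝ → ℂ → ℂ}

theorem PicardBounds.mem_closedBall (hP : PicardBounds G ρ ρ' M L T) {z w : ℂ} {t : ℝ}
    (hz : z ∈ ball 0 ρ) (ht : t ∈ Icc 0 T) (hw : ‖w - z‖ ≤ M * t) : w ∈ closedBall 0 ρ' := by
  rw [mem_closedBall_zero_iff]
  calc ‖w‖ ≤ ‖w - z‖ + ‖z‖ := norm_le_norm_sub_add w z
    _ ≤ M * T + ρ :=
      add_le_add (hw.trans (mul_le_mul_of_nonneg_left ht.2 hP.nonneg)) (mem_ball_zero_iff.1 hz).le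
    _ ≤ ρ' := by linarith [hP.mul_le]

theorem PicardBounds.lipschitz_mul_le_of_mem (hP : PicardBounds G ρ ρ' M L T) {t : ℝ}
    (ht : t ∈ Icc 0 T) : L * t ≤ 1 / 2 :=
  (mul_le_mul_of_nonneg_left ht.2 L.coe_nonneg).trans hP.lipschitz_mul_le

namespace PicardInvariant

theorem mapsTo (hP : PicardBounds G ρ ρ' M L T) (hΦ : PicardInvariant Φ ρ M T) {z : ℂ}
    (hz : z ∈ ball 0 ρ) : MapsTo (Φ · z) (Icc 0 T) (closedBall 0 ρ') := fun t ht =>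
  hP.mem_closedBall hz ht (hΦ.norm_sub_le z hz t ht)

theorem continuousOn_comp (hP : PicardBounds G ρ ρ' M L T) (hΦ : PicardInvariant Φ ρ M T)
    {z : ℂ} (hz : z ∈ ball 0 ρ) : ContinuousOn (fun s => G (Φ s z)) (Icc 0 T) :=
  hP.lipschitzOnWith.continuousOn.comp (hΦ.continuousOn z hz) (hΦ.mapsTo hP hz)

theorem continuousOn_picardStep (hP : PicardBounds G ρ ρ' M L T)
    (hΦ : PicardInvariant Φ ρ M T) {z : ℂ} (hz : z ∈ ball 0 ρ) :
    ContinuousOn (picardStep G Φ · z) (Icc 0 T) := fun _ ht =>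
  ((hΦ.continuousOn_comp hP hz).hasDerivWithinAt_integral_Icc ht).continuousWithinAt.const_add z

theorem norm_picardStep_sub_le (hP : PicardBounds G ρ ρ' M L T)
    (hΦ : PicardInvariant Φ ρ M T) {z : ℂ} (hz : z ∈ ball 0 ρ) {t : ℝ} (ht : t ∈ Icc 0 T) :
    ‖picardStep G Φ t z - z‖ ≤ M * t := by
  rw [picardStep, add_sub_cancel_left]
  refine (intervalIntegral.norm_integral_le_of_norm_le_const fun s hs => ?_).trans_eq
    (by rw [sub_zero, abs_of_nonneg ht.1, mul_comm])
  rw [uIoc_of_le ht.1] at hs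
  exact hP.norm_le _ (hΦ.mapsTo hP hz ⟨hs.1.le, hs.2.trans ht.2⟩)

theorem lipschitzOnWith_picardStep (hP : PicardBounds G ρ ρ' M L T)
    (hΦ : PicardInvariant Φ ρ M T) {t : ℝ} (ht : t ∈ Icc 0 T) :
    LipschitzOnWith 2 (picardStep G Φ t) (ball 0 ρ) := by
  refine LipschitzOnWith.of_dist_le_mul fun z hz w hw => ?_
  have hsub : Icc 0 t ⊆ Icc 0 T := Icc_subset_Icc le_rfl ht.2
  have hint := hP.lipschitzOnWith.norm_integral_comp_sub_le ht.1
    ((hΦ.continuousOn z hz).mono hsub) ((hΦ.continuousOn w hw).mono hsub)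
    ((hΦ.mapsTo hP hz).mono_left hsub) ((hΦ.mapsTo hP hw).mono_left hsub)
    (C := 2 * ‖z - w‖) fun s hs => by
      simpa [dist_eq_norm] using (hΦ.lipschitzOnWith s (hsub hs)).dist_le_mul z hz w hw
  have hLt := hP.lipschitz_mul_le_of_mem ht
  rw [dist_eq_norm, dist_eq_norm, picardStep, picardStep, add_sub_add_comm]
  calc ‖z - w + ((∫ s in (0:ℝ)..t, G (Φ s z)) - ∫ s in (0:ℝ)..t, G (Φ s w))‖
      ≤ ‖z - w‖ + L * (2 * ‖z - w‖) * t := (norm_add_le _ _).trans (by gcongr)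
    _ ≤ ((2 : ℝ≥0) : ℝ) * ‖z - w‖ := by
      push_cast
      nlinarith [norm_nonneg (z - w)]

theorem hasDerivAt_picardStep (hP : PicardBounds G ρ ρ' M L T)
    (hΦ : PicardInvariant Φ ρ M T) {z : ℂ} (hz : z ∈ ball 0 ρ) :
    ∃ D : ℝ → ℂ, ContinuousOn D (Icc 0 T) ∧
      ∀ t ∈ Icc 0 T, HasDerivAt (picardStep G Φ t) (D t) z := by
  obtain ⟨D, hDc, hD⟩ := hΦ.hasDerivAt z hz
  have hball : MapsTo (Φ · z) (Icc 0 T) (ball 0 1) :=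
    (hΦ.mapsTo hP hz).mono_right (closedBall_subset_ball hP.lt_one)
  set F' : ℝ → ℂ := fun s => deriv G (Φ s z) * D s
  have hF'c : ContinuousOn F' (Icc 0 T) :=
    ((hP.differentiableOn.analyticOnNhd isOpen_ball).deriv.continuousOn.comp
      (hΦ.continuousOn z hz) hball).mul hDc
  refine ⟨fun t => 1 + ∫ s in (0:ℝ)..t, F' s, fun t ht =>
    (hF'c.hasDerivWithinAt_integral_Icc ht).continuousWithinAt.const_add 1, fun t ht => ?_⟩
  have hsub : uIoc 0 t ⊆ Icc 0 T := by
    rw [uIoc_of_le ht.1]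
    exact fun s hs => ⟨hs.1.le, hs.2.trans ht.2⟩
  have hmeas : ∀ {f : ℝ → ℂ}, ContinuousOn f (Icc 0 T) →
      AEStronglyMeasurable f (volume.restrict (uIoc 0 t)) := fun hf =>
    (hf.mono hsub).aestronglyMeasurable measurableSet_uIoc
  have hderiv := hasDerivAt_integral_of_dominated_loc_of_lip (F := fun x s => G (Φ s x))
    (F' := F') (bound := fun _ => ((L * 2 : ℝ≥0) : ℝ)) (isOpen_ball.mem_nhds hz) ?_ ?_
    (hmeas hF'c) ?_ intervalIntegrable_const ?_
  · exact (hasDerivAt_id z).add hderiv.2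
  · filter_upwards [isOpen_ball.mem_nhds hz] with x hx using hmeas (hΦ.continuousOn_comp hP hx)
  · exact ((hΦ.continuousOn_comp hP hz).mono (Icc_subset_Icc le_rfl ht.2)).intervalIntegrable_of_Icc
      ht.1
  · refine ae_of_all _ fun s hs => ?_
    rw [Real.nnabs_coe]
    exact hP.lipschitzOnWith.comp (hΦ.lipschitzOnWith s (hsub hs))
      fun x hx => hΦ.mapsTo hP hx (hsub hs)
  · refine ae_of_all _ fun s hs => ?_
    have hGd := hP.differentiableOn.differentiableAt (isOpen_ball.mem_nhds (hball (hsub hs)))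
    exact hGd.hasDerivAt.comp z (hD s (hsub hs))

end PicardInvariant

theorem PicardBounds.picardInvariant_picardIter (hP : PicardBounds G ρ ρ' M L T) (n : ℕ) :
    PicardInvariant (picardIter G n) ρ M T := by
  induction n with
  | zero =>
    refine ⟨fun _ _ => continuousOn_const, fun z _ t ht => ?_,
      fun _ _ => (LipschitzWith.id.weaken one_le_two).lipschitzOnWith,
      fun z _ => ⟨fun _ => 1, continuousOn_const, fun _ _ => hasDerivAt_id z⟩⟩
    simpa [picardIter] using mul_nonneg hP.nonneg ht.1
  | succ n ih =>
    exact ⟨fun z hz => ih.continuousOn_picardStep hP hz,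
      fun z hz t ht => ih.norm_picardStep_sub_le hP hz ht,
      fun t ht => ih.lipschitzOnWith_picardStep hP ht, fun z hz => ih.hasDerivAt_picardStep hP hz⟩

theorem PicardBounds.norm_picardIter_succ_sub_le (hP : PicardBounds G ρ ρ' M L T) (n : ℕ)
    {z : ℂ} (hz : z ∈ ball 0 ρ) {t : ℝ} (ht : t ∈ Icc 0 T) :
    ‖picardIter G (n + 1) t z - picardIter G n t z‖ ≤ M * T * (1 / 2) ^ n := by
  induction n generalizing t with
  | zero =>
    rw [pow_zero, mul_one]
    exact ((hP.picardInvariant_picardIter 1).norm_sub_le z hz t ht).trans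
      (mul_le_mul_of_nonneg_left ht.2 hP.nonneg)
  | succ n ih =>
    have hsub : Icc 0 t ⊆ Icc 0 T := Icc_subset_Icc le_rfl ht.2
    have hΦ := hP.picardInvariant_picardIter
    have hI := hP.lipschitzOnWith.norm_integral_comp_sub_le ht.1
      (((hΦ (n + 1)).continuousOn z hz).mono hsub) (((hΦ n).continuousOn z hz).mono hsub)
      (((hΦ (n + 1)).mapsTo hP hz).mono_left hsub) (((hΦ n).mapsTo hP hz).mono_left hsub)
      fun s hs => ih (hsub hs)
    have hLt := hP.lipschitz_mul_le_of_mem ht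
    have hC : 0 ≤ M * T * (1 / 2 : ℝ) ^ n :=
      mul_nonneg (mul_nonneg hP.nonneg (ht.1.trans ht.2)) (by positivity)
    calc ‖picardIter G (n + 2) t z - picardIter G (n + 1) t z‖
        ≤ L * (M * T * (1 / 2) ^ n) * t := by
          simpa only [picardIter, picardStep, add_sub_add_left_eq_sub] using hI
      _ ≤ M * T * (1 / 2) ^ (n + 1) := by
          rw [pow_succ]
          nlinarith [mul_le_mul_of_nonneg_left hLt hC]

noncomputable def picardLimit (G : ℂ → ℂ) (t : ℝ) (z : ℂ) : ℂ :=
  limUnder atTop (picardIter G · t z)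

namespace PicardBounds

variable {z : ℂ} {t : ℝ}

theorem tendsto_picardIter (hP : PicardBounds G ρ ρ' M L T) (hz : z ∈ ball 0 ρ)
    (ht : t ∈ Icc 0 T) : Tendsto (picardIter G · t z) atTop (𝓝 (picardLimit G t z)) :=
  (cauchySeq_of_le_geometric (1 / 2) (M * T) (by norm_num) fun n => by
    rw [dist_comm, dist_eq_norm]
    exact hP.norm_picardIter_succ_sub_le n hz ht).tendsto_limUnder

theorem dist_picardIter_picardLimit_le (hP : PicardBounds G ρ ρ' M L T) (n : ℕ)
    (hz : z ∈ ball 0 ρ) (ht : t ∈ Icc 0 T) :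
    dist (picardIter G n t z) (picardLimit G t z) ≤ 2 * (M * T) * (1 / 2) ^ n := by
  have := dist_le_of_le_geometric_of_tendsto (1 / 2) (M * T) (by norm_num) (fun k => by
    rw [dist_comm, dist_eq_norm]
    exact hP.norm_picardIter_succ_sub_le k hz ht) (hP.tendsto_picardIter hz ht) n
  exact this.trans_eq (by ring)

theorem norm_picardLimit_sub_le (hP : PicardBounds G ρ ρ' M L T) (hz : z ∈ ball 0 ρ)
    (ht : t ∈ Icc 0 T) : ‖picardLimit G t z - z‖ ≤ M * t :=
  le_of_tendsto ((hP.tendsto_picardIter hz ht).sub_const z).norm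
    (Eventually.of_forall fun n => (hP.picardInvariant_picardIter n).norm_sub_le z hz t ht)

theorem continuousOn_picardLimit (hP : PicardBounds G ρ ρ' M L T) (hz : z ∈ ball 0 ρ) :
    ContinuousOn (picardLimit G · z) (Icc 0 T) :=
  (tendstoUniformlyOn_of_dist_le_geometric (F := fun n t => picardIter G n t z)
    (f := (picardLimit G · z)) (by norm_num) (by norm_num) fun n _ ht =>
      hP.dist_picardIter_picardLimit_le n hz ht).continuousOn
    (Frequently.of_forall fun n => (hP.picardInvariant_picardIter n).continuousOn z hz)

theorem differentiableOn_picardLimit (hP : PicardBounds G ρ ρ' M L T) (ht : t ∈ Icc 0 T) :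
    DifferentiableOn ℂ (picardLimit G t) (ball 0 ρ) := by
  have hunif := tendstoUniformlyOn_of_dist_le_geometric (F := fun n => picardIter G n t)
    (f := picardLimit G t) (by norm_num) (by norm_num) fun n _ hz =>
      hP.dist_picardIter_picardLimit_le n hz ht
  refine hunif.tendstoLocallyUniformlyOn.differentiableOn
    (Eventually.of_forall fun n z hz => ?_) isOpen_ball
  obtain ⟨D, -, hD⟩ := (hP.picardInvariant_picardIter n).hasDerivAt z hz
  exact (hD t ht).differentiableAt.differentiableWithinAt

theorem mapsTo_picardLimit (hP : PicardBounds G ρ ρ' M L T) (hz : z ∈ ball 0 ρ) :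
    MapsTo (picardLimit G · z) (Icc 0 T) (closedBall 0 ρ') := fun _ ht =>
  hP.mem_closedBall hz ht (hP.norm_picardLimit_sub_le hz ht)

theorem picardLimit_eq_integral (hP : PicardBounds G ρ ρ' M L T) (hz : z ∈ ball 0 ρ)
    (ht : t ∈ Icc 0 T) :
    picardLimit G t z = z + ∫ s in (0:ℝ)..t, G (picardLimit G s z) := by
  refine tendsto_nhds_unique ((hP.tendsto_picardIter hz ht).comp (tendsto_add_atTop_nat 1))
    (tendsto_const_nhds.add (tendsto_iff_norm_sub_tendsto_zero.2 ?_))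
  have hsub : Icc 0 t ⊆ Icc 0 T := Icc_subset_Icc le_rfl ht.2
  have hΦ := hP.picardInvariant_picardIter
  refine squeeze_zero (fun _ => norm_nonneg _) (fun n =>
    hP.lipschitzOnWith.norm_integral_comp_sub_le ht.1 (((hΦ n).continuousOn z hz).mono hsub)
      ((hP.continuousOn_picardLimit hz).mono hsub) (((hΦ n).mapsTo hP hz).mono_left hsub)
      ((hP.mapsTo_picardLimit hz).mono_left hsub)
      fun s hs => (dist_eq_norm _ _).symm.trans_le
        (hP.dist_picardIter_picardLimit_le n hz (hsub hs))) ?_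
  have h := ((tendsto_pow_atTop_nhds_zero_of_lt_one (by norm_num : (0:ℝ) ≤ 1 / 2)
    (by norm_num)).const_mul (L * (2 * (M * T)))).mul_const t
  rw [mul_zero, zero_mul] at h
  exact h.congr fun n => by ring

theorem isDiskSolution_picardLimit (hP : PicardBounds G ρ ρ' M L T) (hz : z ∈ ball 0 ρ) :
    IsDiskSolution G z (picardLimit G · z) T :=
  ⟨hP.continuousOn_picardLimit hz,
    (hP.mapsTo_picardLimit hz).mono_right (closedBall_subset_ball hP.lt_one),
    fun _ ht => hP.picardLimit_eq_integral hz ht⟩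

theorem exists_extend (hP : PicardBounds G ρ ρ' M L T) {r τ h : ℝ} {Y : ℝ → ℂ → ℂ}
    (hY : ∀ z ∈ ball (0:ℂ) r, IsDiskSolution G z (Y · z) τ)
    (hYd : ∀ t ∈ Icc 0 τ, DifferentiableOn ℂ (Y t) (ball 0 r))
    (hYτ : MapsTo (Y τ) (ball 0 r) (ball 0 ρ)) (hτ : 0 ≤ τ) (hh : 0 ≤ h) (hhT : h ≤ T) :
    ∃ Y' : ℝ → ℂ → ℂ, (∀ z ∈ ball (0:ℂ) r, IsDiskSolution G z (Y' · z) (τ + h)) ∧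
      ∀ t ∈ Icc 0 (τ + h), DifferentiableOn ℂ (Y' t) (ball 0 r) := by
  refine ⟨fun t z => if t ≤ τ then Y t z else picardLimit G (t - τ) (Y τ z), fun z hz =>
    (hY z hz).glue hP.differentiableOn.continuousOn
      ((hP.isDiskSolution_picardLimit (hYτ hz)).mono hhT) hτ hh, fun t ht => ?_⟩
  by_cases htτ : t ≤ τ
  · simpa only [htτ, if_true] using hYd t ⟨ht.1, htτ⟩
  · simp only [htτ, if_false]
    exact (hP.differentiableOn_picardLimit ⟨by linarith, by linarith [ht.2]⟩).comp
      (hYd τ ⟨hτ, le_rfl⟩) hYτ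

end PicardBounds

theorem exists_picardBounds (hG : DifferentiableOn ℂ G (ball 0 1)) (hρ : ρ < ρ')
    (hρ' : ρ' < 1) : ∃ M L T, 0 < T ∧ PicardBounds G ρ ρ' M L T := by
  obtain ⟨M, hM⟩ := (isCompact_closedBall (0:ℂ) ρ').exists_bound_of_continuousOn
    (hG.continuousOn.mono (closedBall_subset_ball hρ'))
  obtain ⟨L, hL⟩ := exists_lipschitzOnWith_closedBall hG hρ'
  have hsmall : ∀ K : ℝ, ∀ ε > 0, ∀ᶠ T in 𝓝[>] (0:ℝ), K * T < ε := fun K ε hε =>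
    nhdsWithin_le_nhds (((continuous_const.mul continuous_id).tendsto' 0 0 (by simp)).eventually
      (gt_mem_nhds hε))
  obtain ⟨T, hMT, hLT, hT⟩ := ((hsmall (max M 0) _ (sub_pos.2 hρ)).and
    ((hsmall L (1 / 2) (by norm_num)).and self_mem_nhdsWithin)).exists
  exact ⟨max M 0, L, T, hT, hG, hρ', fun w hw => (hM w hw).trans (le_max_left _ _), hL,
    le_max_right _ _, hMT.le, hLT.le⟩

variable {c : ℝ}

theorem exists_isDiskSolution_differentiableOn (hG : DifferentiableOn ℂ G (ball 0 1))
    (hc : 0 ≤ c) (hL : LyapunovBound G c) {r S : ℝ} (hr₀ : 0 ≤ r) (hr : r < 1) (hS : 0 ≤ S) :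
    ∃ Y : ℝ → ℂ → ℂ, (∀ z ∈ ball (0:ℂ) r, IsDiskSolution G z (Y · z) S) ∧
      ∀ t ∈ Icc 0 S, DifferentiableOn ℂ (Y t) (ball 0 r) := by
  obtain ⟨ρ, hRρ, hρ⟩ := exists_between (lyapunovRadius_lt_one (c := c) (S := S) hr₀ hr)
  obtain ⟨ρ', hρρ', hρ'⟩ := exists_between hρ
  obtain ⟨M, L, T, hT, hP⟩ := exists_picardBounds hG hρρ' hρ'
  -- Up to time `S`, solutions from `ball 0 r` stay in `closedBall 0 (lyapunovRadius c r S)`,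
  -- inside `ball 0 ρ`, so the Picard flow with the fixed step `T` can be restarted at each `k * T`.
  have hstep : ∀ k : ℕ, ∃ Y : ℝ → ℂ → ℂ,
      (∀ z ∈ ball (0:ℂ) r, IsDiskSolution G z (Y · z) (min (k * T) S)) ∧
        ∀ t ∈ Icc 0 (min (k * T) S), DifferentiableOn ℂ (Y t) (ball 0 r) := by
    intro k
    induction k with
    | zero =>
      refine ⟨fun _ z => z, fun z hz => ⟨continuousOn_const, fun _ _ => ?_, fun t ht => ?_⟩,
        fun _ _ => differentiableOn_id⟩
      · exact ball_subset_ball hr.le hz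
      · simp [le_antisymm (by simpa [hS] using ht.2) ht.1]
    | succ k ih =>
      obtain ⟨Y, hY, hYd⟩ := ih
      set τ := min (k * T) S
      set τ' := min ((k + 1 : ℕ) * T) S
      have hτ : 0 ≤ τ := le_min (by positivity) hS
      have hττ' : τ ≤ τ' := min_le_min_right _ (by push_cast; nlinarith)
      have hτ'T : τ' - τ ≤ T := by
        have : τ' ≤ τ + T := by
          rw [← min_add_add_right]
          exact min_le_min (by push_cast; linarith) (by linarith)
        linarith
      have hYτ : MapsTo (Y τ) (ball 0 r) (ball 0 ρ) := fun z hz =>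
        mem_ball_zero_iff.2 <| ((hY z hz).norm_le_lyapunovRadius hG.continuousOn hc hL
          (mem_ball_zero_iff.1 hz).le (min_le_right _ _) ⟨hτ, le_rfl⟩).trans_lt hRρ
      rw [← add_sub_cancel τ τ']
      exact hP.exists_extend hY hYd hYτ hτ (sub_nonneg.2 hττ') hτ'T
  obtain ⟨k, hk⟩ := exists_nat_ge (S / T)
  have hkS : min (k * T) S = S := min_eq_right (by rwa [div_le_iff₀ hT] at hk)
  simpa only [hkS] using hstep k

/-- The value at time `t` of a solution on `[0, t]` chosen by `Classical.epsilon`; by uniqueness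
(`diskFlow_eq`) the choice is irrelevant whenever a solution exists. -/
noncomputable def diskFlow (G : ℂ → ℂ) (t : ℝ) (z : ℂ) : ℂ :=
  Classical.epsilon (fun y : ℝ → ℂ => IsDiskSolution G z y t) t

variable {z : ℂ} {y : ℝ → ℂ} {b t : ℝ}

theorem diskFlow_eq (hG : DifferentiableOn ℂ G (ball 0 1)) (hc : 0 ≤ c)
    (hL : LyapunovBound G c) (h : IsDiskSolution G z y b) (ht : t ∈ Icc 0 b) :
    diskFlow G t z = y t :=
  (Classical.epsilon_spec (p := fun y => IsDiskSolution G z y t) ⟨y, h.mono ht.2⟩).eq_of_le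
    hG hc hL h ⟨ht.1, le_rfl⟩ ht.2

theorem isDiskSolution_diskFlow (hG : DifferentiableOn ℂ G (ball 0 1)) (hc : 0 ≤ c)
    (hL : LyapunovBound G c) (hz : z ∈ ball 0 1) (hb : 0 ≤ b) :
    IsDiskSolution G z (diskFlow G · z) b := by
  obtain ⟨r, hzr, hr⟩ := exists_between (mem_ball_zero_iff.1 hz)
  obtain ⟨Y, hY, -⟩ :=
    exists_isDiskSolution_differentiableOn hG hc hL ((norm_nonneg z).trans hzr.le) hr hb
  have h := hY z (mem_ball_zero_iff.2 hzr)
  exact h.congr fun t ht => (diskFlow_eq hG hc hL h ht).symm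

theorem diskFlow_zero (hG : DifferentiableOn ℂ G (ball 0 1)) (hc : 0 ≤ c)
    (hL : LyapunovBound G c) (hz : z ∈ ball 0 1) : diskFlow G 0 z = z :=
  (isDiskSolution_diskFlow hG hc hL hz le_rfl).apply_zero le_rfl

theorem differentiableOn_diskFlow (hG : DifferentiableOn ℂ G (ball 0 1)) (hc : 0 ≤ c)
    (hL : LyapunovBound G c) (ht : 0 ≤ t) : DifferentiableOn ℂ (diskFlow G t) (ball 0 1) := by
  intro z hz
  obtain ⟨r, hzr, hr⟩ := exists_between (mem_ball_zero_iff.1 hz)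
  obtain ⟨Y, hY, hYd⟩ :=
    exists_isDiskSolution_differentiableOn hG hc hL ((norm_nonneg z).trans hzr.le) hr ht
  have hdiff : DifferentiableOn ℂ (diskFlow G t) (ball 0 r) := (hYd t ⟨ht, le_rfl⟩).congr
    fun w hw => diskFlow_eq hG hc hL (hY w hw) ⟨ht, le_rfl⟩
  exact (hdiff.differentiableAt (isOpen_ball.mem_nhds (mem_ball_zero_iff.2 hzr)))
    |>.differentiableWithinAt

theorem diskFlow_add (hG : DifferentiableOn ℂ G (ball 0 1)) (hc : 0 ≤ c)
    (hL : LyapunovBound G c) {s : ℝ} (ht : 0 ≤ t) (hs : 0 ≤ s) (hz : z ∈ ball 0 1) :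
    diskFlow G (t + s) z = diskFlow G t (diskFlow G s z) :=
  (diskFlow_eq hG hc hL ((isDiskSolution_diskFlow hG hc hL hz (add_nonneg ht hs)).shift
    hG.continuousOn hs (add_comm s t).le) ⟨ht, le_rfl⟩).symm

theorem hasDerivWithinAt_diskFlow (hG : DifferentiableOn ℂ G (ball 0 1)) (hc : 0 ≤ c)
    (hL : LyapunovBound G c) (hz : z ∈ ball 0 1) :
    HasDerivWithinAt (diskFlow G · z) (G z) (Ici 0) 0 := by
  have h := isDiskSolution_diskFlow hG hc hL hz zero_le_one
  have := (h.hasDerivWithinAt hG.continuousOn ⟨le_rfl, zero_le_one⟩).mono_of_mem_nhdsWithin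
    (Icc_mem_nhdsGE zero_lt_one)
  rwa [h.apply_zero zero_le_one] at this

theorem isGenOnDisk_neg (hG : DifferentiableOn ℂ G (ball 0 1)) (hc : 0 ≤ c)
    (hL : LyapunovBound G c) : IsGenOnDisk (fun z => -G z) := by
  refine ⟨diskFlow G, fun t ht => ⟨differentiableOn_diskFlow hG hc hL ht, fun z hz =>
    (isDiskSolution_diskFlow hG hc hL hz ht).mapsTo ⟨ht, le_rfl⟩⟩,
    fun t s ht hs z hz => diskFlow_add hG hc hL ht hs hz, fun z hz => ?_, fun z hz => ?_⟩
  · have := (hasDerivWithinAt_diskFlow hG hc hL hz).continuousWithinAt.mono Ioi_subset_Ici_self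
    rwa [ContinuousWithinAt, diskFlow_zero hG hc hL hz] at this
  · simpa only [diskFlow_zero hG hc hL hz] using tendsto_sub_div_of_hasDerivWithinAt
      ((hasDerivWithinAt_diskFlow hG hc hL hz).mono Ioi_subset_Ici_self)

end DiskFlow

section PositiveRealPart

open Complex

theorem conj_mul_one_sub_sq (z : ℂ) :
    conj z * (1 - z) ^ 2 = ((1 - ‖z‖ ^ 2 : ℝ) : ℂ) * (1 - z) - ((‖1 - z‖ ^ 2 : ℝ) : ℂ) := by
  push_cast
  rw [← mul_conj', ← mul_conj', map_sub, map_one]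
  ring

variable {P : ℂ → ℂ} {a : ℝ} {z : ℂ}

theorem one_sub_sq_norm_mul_sq_norm_le (hP : DifferentiableOn ℂ P (ball 0 1))
    (hre : ∀ w ∈ ball (0:ℂ) 1, 0 < (P w).re) (hP0 : P 0 = a) (hz : z ∈ ball (0:ℂ) 1) :
    (1 - ‖z‖ ^ 2) * ‖P z‖ ^ 2 ≤ 4 * a * (P z).re := by
  have ha : 0 < a := by simpa [hP0] using hre 0 (mem_ball_self one_pos)
  have hsq : ∀ w, ‖P w + a‖ ^ 2 - ‖P w - a‖ ^ 2 = 4 * a * (P w).re := fun w => by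
    simp only [Complex.sq_norm, normSq_apply, add_re, add_im, sub_re, sub_im, ofReal_re, ofReal_im]
    ring
  have hlt : ∀ w ∈ ball (0:ℂ) 1, ‖P w - a‖ < ‖P w + a‖ := fun w hw => by
    have := hsq w
    have := mul_pos ha (hre w hw)
    exact (sq_lt_sq₀ (norm_nonneg _) (norm_nonneg _)).1 (by linarith)
  have hden : ∀ w ∈ ball (0:ℂ) 1, P w + a ≠ 0 := fun w hw =>
    norm_pos_iff.1 ((norm_nonneg _).trans_lt (hlt w hw))
  have hschwarz : ‖(P z - a) / (P z + a)‖ ≤ ‖z‖ :=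
    norm_le_norm_of_mapsTo_ball ((hP.sub_const _).div (hP.add_const _) hden)
      (fun w hw => mem_closedBall_zero_iff.2 <| by
        rw [Pi.div_apply, norm_div]
        exact (div_lt_one ((norm_nonneg _).trans_lt (hlt w hw))).2 (hlt w hw) |>.le)
      (by simp [hP0]) (mem_ball_zero_iff.1 hz)
  rw [norm_div, div_le_iff₀ (norm_pos_iff.2 (hden z hz))] at hschwarz
  have hsq' := pow_le_pow_left₀ (norm_nonneg _) hschwarz 2
  have hz1 : ‖z‖ ^ 2 < 1 := by
    have := mem_ball_zero_iff.1 hz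
    nlinarith [norm_nonneg z]
  have hnorm : ‖P z + a‖ ^ 2 = ‖P z‖ ^ 2 + 2 * a * (P z).re + a ^ 2 := by
    simp only [Complex.sq_norm, normSq_apply, add_re, add_im, ofReal_re, ofReal_im]
    ring
  rw [mul_pow] at hsq'
  nlinarith [hsq z, mul_pos ha (hre z hz), sq_nonneg (‖z‖), sq_nonneg a]

theorem inner_one_sub_sq_mul_le_of_pos (hP : DifferentiableOn ℂ P (ball 0 1))
    (hre : ∀ w ∈ ball (0:ℂ) 1, 0 < (P w).re) (hP0 : P 0 = a) (hz : z ∈ ball (0:ℂ) 1) :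
    ⟪z, (1 - z) ^ 2 * P z⟫ ≤ a * (1 - ‖z‖ ^ 2) := by
  have hkey := one_sub_sq_norm_mul_sq_norm_le hP hre hP0 hz
  have hR := hre z hz
  have hδ : 0 ≤ 1 - ‖z‖ ^ 2 := by
    have := mem_ball_zero_iff.1 hz
    nlinarith [norm_nonneg z]
  have hmul : ((1 - z) * P z).re ≤ ‖1 - z‖ * ‖P z‖ :=
    (re_le_norm _).trans (norm_mul _ _).le
  rw [Complex.inner, mul_comm, ← mul_assoc, conj_mul_one_sub_sq, sub_mul, sub_re,
    mul_assoc, re_ofReal_mul, re_ofReal_mul]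
  -- AM-GM with `δ = 1 - ‖z‖²`: `δ ‖1 - z‖ ‖P z‖ ≤ ‖1 - z‖² Re P z + δ² ‖P z‖² / (4 Re P z)`,
  -- and `δ ‖P z‖² ≤ 4 a Re P z`.
  nlinarith [sq_nonneg (2 * ‖1 - z‖ * (P z).re - (1 - ‖z‖ ^ 2) * ‖P z‖),
    mul_le_mul_of_nonneg_left hmul hδ, mul_le_mul_of_nonneg_left hkey hδ, norm_nonneg (1 - z),
    norm_nonneg (P z)]

theorem inner_one_sub_sq_mul_le (hP : DifferentiableOn ℂ P (ball 0 1))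
    (hre : ∀ w ∈ ball (0:ℂ) 1, 0 ≤ (P w).re) (hP0 : P 0 = a) (hz : z ∈ ball (0:ℂ) 1) :
    ⟪z, (1 - z) ^ 2 * P z⟫ ≤ a * (1 - ‖z‖ ^ 2) := by
  set K := ⟪z, (1 - z) ^ 2⟫
  have hpert : ∀ ε : ℝ, 0 < ε → ⟪z, (1 - z) ^ 2 * P z⟫ ≤ (a + ε) * (1 - ‖z‖ ^ 2) - ε * K :=
    fun ε hε => by
      have h := inner_one_sub_sq_mul_le_of_pos (P := fun w => P w + ε) (hP.add_const _)
        (fun w hw => by simpa using add_pos_of_nonneg_of_pos (hre w hw) hε)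
        (a := a + ε) (by push_cast [hP0]; rfl) hz
      rw [mul_add, inner_add_right, mul_comm _ (ε : ℂ), ← Complex.real_smul,
        inner_smul_right] at h
      linarith
  have hlim : Tendsto (fun ε : ℝ => (a + ε) * (1 - ‖z‖ ^ 2) - ε * K) (𝓝[>] 0)
      (𝓝 (a * (1 - ‖z‖ ^ 2))) := by
    have hcont : Continuous fun ε : ℝ => (a + ε) * (1 - ‖z‖ ^ 2) - ε * K := by fun_prop
    simpa using (hcont.tendsto 0).mono_left nhdsWithin_le_nhds
  exact ge_of_tendsto hlim (eventually_nhdsWithin_of_forall hpert)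

end PositiveRealPart

open Complex DiskFlow

theorem lyapunovBound_one_sub_sq_mul {p : ℂ → ℂ} (hp : DifferentiableOn ℂ p (ball 0 1))
    (hre : ∀ z ∈ ball (0:ℂ) 1, 0 ≤ (p z).re) :
    LyapunovBound (fun z => (1 - z) ^ 2 * p z) (2 * ((p 0).re + |(p 0).im|)) := by
  intro w hw
  set b := (p 0).im
  have hbound := inner_one_sub_sq_mul_le (P := fun z => p z - b * I) (hp.sub_const _)
    (fun z hz => by simpa using hre z hz) (a := (p 0).re) (by apply Complex.ext <;> simp [b]) hw
  have hsplit : ⟪w, (1 - w) ^ 2 * p w⟫ =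
      ⟪w, (1 - w) ^ 2 * (p w - b * I)⟫ + b * w.im * (1 - ‖w‖ ^ 2) := by
    simp only [Complex.inner]
    rw [show (1 - w) ^ 2 * p w * conj w = (1 - w) ^ 2 * (p w - b * I) * conj w +
      b * (I * (conj w * (1 - w) ^ 2)) by ring, conj_mul_one_sub_sq]
    simp only [ofReal_sub, ofReal_one, add_re, mul_re, sub_re, ofReal_re, I_re, mul_zero,
      ofReal_im, I_im, mul_one, sub_self, sub_zero, sub_im, mul_im, add_zero, conj_re, conj_im,
      mul_neg, sub_neg_eq_add, one_re, one_im, zero_sub, zero_mul, neg_zero, one_mul, zero_add,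
      add_right_inj]
    ring
  have hδ : 0 ≤ 1 - ‖w‖ ^ 2 := by
    have := mem_ball_zero_iff.1 hw
    nlinarith [norm_nonneg w]
  have him : b * w.im ≤ |b| := (le_abs_self _).trans <| by
    rw [abs_mul]
    exact mul_le_of_le_one_right (abs_nonneg b)
      ((abs_im_le_norm w).trans (mem_ball_zero_iff.1 hw).le)
  show 2 * ⟪w, (1 - w) ^ 2 * p w⟫ ≤ _
  rw [hsplit]
  nlinarith [mul_le_mul_of_nonneg_right him hδ]

theorem lyapunovBound_neg_mul {p : ℂ → ℂ} (hre : ∀ z ∈ ball (0:ℂ) 1, 0 ≤ (p z).re) :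
    LyapunovBound (fun z => -(z * p z)) 0 := by
  intro w hw
  rw [inner_neg_right, Complex.inner, mul_comm w, mul_assoc, mul_conj', ← ofReal_pow,
    re_mul_ofReal, zero_mul]
  nlinarith [hre w hw, sq_nonneg ‖w‖]

/-- if `p` is holomorphic on the unit disk with `Re p ≥ 0`, then both
`g z = -(1 - z)² p z` and `g₁ z = z p z` are infinitesimal generators of
one-parameter continuous semigroups of holomorphic self-maps of the disk. -/
theorem berkson_porta_special_generators (p : ℂ → ℂ)
    (hp : DifferentiableOn ℂ p (ball (0 : ℂ) 1))
    (hre : ∀ z ∈ ball (0 : ℂ) 1, 0 ≤ (p z).re) :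
    IsGenOnDisk (fun z : ℂ => -(1 - z) ^ 2 * p z) ∧
      IsGenOnDisk (fun z : ℂ => z * p z) := by
  have hc : 0 ≤ 2 * ((p 0).re + |(p 0).im|) :=
    mul_nonneg zero_le_two (add_nonneg (hre 0 (mem_ball_self one_pos)) (abs_nonneg _))
  constructor
  · convert isGenOnDisk_neg (by fun_prop) hc (lyapunovBound_one_sub_sq_mul hp hre) using 2
    ring
  · simpa using isGenOnDisk_neg (by fun_prop) le_rfl (lyapunovBound_neg_mul hre)
end

section
/- Let g : Δ → ℂ be a holomorphic infinitesimal generator of the form g(z) = −(1 − z)²·p(z) with p : Δ → ℂ holomorphic, Re p(z) ≥ 0 on Δ, and p nowhere vanishing. If the angular limit ∠lim_{z→1} g(z)/|z − 1|³ = 0, then the function g₁(z) = z·p(z) = −z·g(z)/(1 − z)² satisfies ∠lim_{z→1} g₁(z) = 0 and ∠lim_{z→1} g₁(z)/(z − 1) = 0. -/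
open Filter Metric

/-!
Since `g z = -(1 - z)² p z`, the quotient `g z / |z - 1|³` has the same modulus as
`p z / (z - 1)`, so the hypothesis says exactly that `p z / (z - 1) → 0` nontangentially.
Both conclusions are dominated by this quotient on the disk: `|z p z / (z - 1)|` trivially,
and `|z p z| ≤ |z - 1| |p z / (z - 1)| ≤ 2 |p z / (z - 1)|`.
-/

theorem nontangentialRegion_subset_ball (k : ℝ) (τ : ℂ) :
    nontangentialRegion k τ ⊆ ball (0 : ℂ) 1 := fun _ hz =>
  mem_ball_zero_iff.mpr hz.1

theorem AngularLimit.zero_of_norm_le {f g : ℂ → ℂ} {τ : ℂ} (hf : AngularLimit f τ 0) (C : ℝ)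
    (hle : ∀ z ∈ ball (0 : ℂ) 1, ‖g z‖ ≤ C * ‖f z‖) : AngularLimit g τ 0 := by
  intro k hk
  rw [tendsto_zero_iff_norm_tendsto_zero]
  have hbound : Tendsto (fun z => C * ‖f z‖) (nhdsWithin τ (nontangentialRegion k τ)) (nhds 0) :=
    by simpa using ((hf k hk).norm.const_mul C)
  refine squeeze_zero' (Eventually.of_forall fun z => norm_nonneg _) ?_ hbound
  filter_upwards [eventually_mem_nhdsWithin] with z hz
  exact hle z (nontangentialRegion_subset_ball k τ hz)

theorem sub_one_ne_zero_of_mem_ball {z : ℂ} (hz : z ∈ ball (0 : ℂ) 1) : z - 1 ≠ 0 := by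
  rintro h
  rw [sub_eq_zero.mp h] at hz
  simp at hz

theorem norm_neg_one_sub_sq_mul_div_norm_cube {z : ℂ} (hz : z - 1 ≠ 0) (w : ℂ) :
    ‖-(1 - z) ^ 2 * w / ((‖z - 1‖ ^ 3 : ℝ) : ℂ)‖ = ‖w / (z - 1)‖ := by
  have hpos : 0 < ‖z - 1‖ := norm_pos_iff.mpr hz
  rw [norm_div, norm_div, norm_mul, norm_neg, norm_pow, norm_sub_rev 1 z, Complex.norm_real,
    Real.norm_of_nonneg (by positivity)]
  field_simp

theorem norm_mul_le_two_mul_norm_div_sub_one {z : ℂ} (hz : z ∈ ball (0 : ℂ) 1) (w : ℂ) :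
    ‖z * w‖ ≤ 2 * ‖w / (z - 1)‖ := by
  have hz1 : ‖z‖ < 1 := mem_ball_zero_iff.mp hz
  have hpos : 0 < ‖z - 1‖ := norm_pos_iff.mpr (sub_one_ne_zero_of_mem_ball hz)
  have hdist : ‖z - 1‖ ≤ 2 := (norm_sub_le z 1).trans (by norm_num; linarith)
  calc ‖z * w‖ ≤ ‖w‖ := by
        rw [norm_mul]; exact mul_le_of_le_one_left (norm_nonneg w) hz1.le
    _ = ‖z - 1‖ * ‖w / (z - 1)‖ := by rw [norm_div]; field_simp
    _ ≤ 2 * ‖w / (z - 1)‖ := by gcongr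

theorem norm_mul_div_le_norm_div {z : ℂ} (hz : z ∈ ball (0 : ℂ) 1) (w v : ℂ) :
    ‖z * w / v‖ ≤ ‖w / v‖ := by
  rw [mul_div_assoc, norm_mul]
  exact mul_le_of_le_one_left (norm_nonneg _) (mem_ball_zero_iff.mp hz).le

theorem angular_limits_of_associated_generator_general (g p : ℂ → ℂ)
    (hrepr : ∀ z ∈ ball (0 : ℂ) 1, g z = -(1 - z) ^ 2 * p z)
    (hlim : AngularLimit (fun z : ℂ => g z / ((‖z - 1‖ ^ 3 : ℝ) : ℂ)) 1 0) :
    AngularLimit (fun z : ℂ => z * p z) 1 0 ∧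
      AngularLimit (fun z : ℂ => z * p z / (z - 1)) 1 0 := by
  have hquot : AngularLimit (fun z => p z / (z - 1)) 1 0 :=
    hlim.zero_of_norm_le 1 fun z hz => by
      rw [one_mul, hrepr z hz,
        norm_neg_one_sub_sq_mul_div_norm_cube (sub_one_ne_zero_of_mem_ball hz)]
  exact ⟨hquot.zero_of_norm_le 2 fun z hz => norm_mul_le_two_mul_norm_div_sub_one hz (p z),
    hquot.zero_of_norm_le 1 fun z hz =>
      (norm_mul_div_le_norm_div hz (p z) (z - 1)).trans_eq (one_mul _).symm⟩

/-- if the generator `g z = -(1 - z)² p z` (with `p` holomorphic,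
`Re p ≥ 0`, `p` nowhere vanishing on `Δ`) satisfies `∠lim_{z→1} g z / |z-1|³ = 0`,
then `g₁ z = z p z` satisfies `∠lim_{z→1} g₁ z = 0` and `∠lim_{z→1} g₁ z / (z-1) = 0`. -/
theorem angular_limits_of_associated_generator (g p : ℂ → ℂ)
    (hp : DifferentiableOn ℂ p (ball (0 : ℂ) 1))
    (hre : ∀ z ∈ ball (0 : ℂ) 1, 0 ≤ (p z).re)
    (hpne : ∀ z ∈ ball (0 : ℂ) 1, p z ≠ 0)
    (hgen : IsGenOnDisk g)
    (hrepr : ∀ z ∈ ball (0 : ℂ) 1, g z = -(1 - z) ^ 2 * p z)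
    (hlim : AngularLimit (fun z : ℂ => g z / ((‖z - 1‖ ^ 3 : ℝ) : ℂ)) 1 0) :
    AngularLimit (fun z : ℂ => z * p z) 1 0 ∧
      AngularLimit (fun z : ℂ => z * p z / (z - 1)) 1 0 :=
  angular_limits_of_associated_generator_general g p hrepr hlim
end

section
/- For y in the open unit ball 𝔹 of a complex Hilbert space H, the Fréchet derivative of the Möbius transformation M_y at a point x ∈ 𝔹 is given, for every h ∈ H, by M_y'(x)h = (1 − ⟨x,y⟩)⁻² [ −(1 − ⟨x,y⟩)(P_y + sQ_y)h + ⟨h,y⟩(y − P_y x − sQ_y x) ]. -/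
open Metric

variable {H : Type*} [NormedAddCommGroup H] [InnerProductSpace ℂ H]

/-- The inner product in the convention of the paper: `⟨x, y⟩` is linear in the
first argument and conjugate-linear in the second. -/
noncomputable def ip (x y : H) : ℂ := inner ℂ y x

/-- The orthogonal projection `P_y` of `H` onto the span of `y`:
`P_y x = (⟨x, y⟩ / ‖y‖²) y` (and `P_0 = 0`, which this formula also yields). -/
noncomputable def Pproj (y x : H) : H := (ip x y / (‖y‖ ^ 2 : ℂ)) • y

/-- `Q_y = I - P_y`. -/
noncomputable def Qproj (y x : H) : H := x - Pproj y x

/-- The Möbius transformation of the unit ball: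
`M_y x = (y - P_y x - s Q_y x) / (1 - ⟨x, y⟩)`, where `s = √(1 - ‖y‖²)`. -/
noncomputable def Mob (y x : H) : H :=
  (1 - ip x y)⁻¹ • (y - Pproj y x - (Real.sqrt (1 - ‖y‖ ^ 2) : ℂ) • Qproj y x)

/-!
`M_y` is a linear-fractional map `z ↦ (1 - φ z)⁻¹ • (y - L z)` with the continuous linear
functional `φ = ⟨·, y⟩` and the continuous linear operator `L = P_y + s Q_y`, so its derivative
follows from the product and inverse rules; `1 - ⟨x, y⟩ ≠ 0` on the ball by Cauchy–Schwarz.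
-/

section LinearFractional

variable {𝕜 E F : Type*} [NontriviallyNormedField 𝕜] [NormedAddCommGroup E] [NormedSpace 𝕜 E]
  [NormedAddCommGroup F] [NormedSpace 𝕜 F]

theorem hasFDerivAt_inv_one_sub_smul_sub (φ : E →L[𝕜] 𝕜) (L : E →L[𝕜] F) (v : F) {x : E}
    (hx : 1 - φ x ≠ 0) :
    HasFDerivAt (fun z => (1 - φ z)⁻¹ • (v - L z))
      (((1 - φ x) ^ 2)⁻¹ • (-((1 - φ x) • L) + φ.smulRight (v - L x))) x := by
  have hden : HasFDerivAt (fun z => (1 - φ z)⁻¹)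
      (((1 : 𝕜 →L[𝕜] 𝕜).smulRight (-((1 - φ x) ^ 2)⁻¹)).comp (0 - φ)) x :=
    (hasFDerivAt_inv hx).comp x ((hasFDerivAt_const 1 x).sub φ.hasFDerivAt)
  have hnum : HasFDerivAt (fun z => v - L z) (0 - L) x :=
    (hasFDerivAt_const v x).sub L.hasFDerivAt
  refine (hden.smul hnum).congr_fderiv ?_
  ext h
  simp only [zero_sub, smul_neg, ContinuousLinearMap.comp_neg, add_apply, neg_apply, smul_apply,
    ContinuousLinearMap.smulRight_apply, ContinuousLinearMap.comp_apply, one_apply_eq_self,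
    smul_eq_mul, mul_neg, neg_neg, smul_add]
  match_scalars <;> field_simp

end LinearFractional

theorem ip_eq_innerSL (x y : H) : ip x y = innerSL ℂ y x := rfl

theorem one_sub_ip_ne_zero {x y : H} (h : ‖y‖ * ‖x‖ < 1) : 1 - ip x y ≠ 0 := by
  have hlt : ‖ip x y‖ < 1 := (norm_inner_le_norm y x).trans_lt h
  intro h0
  rw [← sub_eq_zero.mp h0, norm_one] at hlt
  exact lt_irrefl 1 hlt

noncomputable def PprojCLM (y : H) : H →L[ℂ] H :=
  ((‖y‖ ^ 2 : ℂ)⁻¹ • innerSL ℂ y).smulRight y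

noncomputable def QprojCLM (y : H) : H →L[ℂ] H :=
  ContinuousLinearMap.id ℂ H - PprojCLM y

@[simp]
theorem PprojCLM_apply (y x : H) : PprojCLM y x = Pproj y x := by
  simp [PprojCLM, Pproj, ip, div_eq_inv_mul]

@[simp]
theorem QprojCLM_apply (y x : H) : QprojCLM y x = Qproj y x := by
  simp [QprojCLM, Qproj]

theorem Mob_eq_inv_one_sub_smul_sub (y : H) :
    Mob y = fun z => (1 - innerSL ℂ y z)⁻¹ •
      (y - (PprojCLM y + (Real.sqrt (1 - ‖y‖ ^ 2) : ℂ) • QprojCLM y) z) := by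
  funext z
  simp [Mob, ip_eq_innerSL, sub_sub]

/-- the Fréchet derivative of `M_y` at a point `x` of the ball is
`h ↦ (1 - ⟨x,y⟩)⁻² [ -(1 - ⟨x,y⟩)(P_y + s Q_y) h + ⟨h,y⟩ (y - P_y x - s Q_y x) ]`. -/
theorem mob_fderiv (y x : H) (hy : ‖y‖ < 1) (hx : ‖x‖ < 1) :
    DifferentiableAt ℂ (Mob y) x ∧
      ∀ h : H, fderiv ℂ (Mob y) x h =
        ((1 - ip x y) ^ 2)⁻¹ •
          (-((1 - ip x y) •
              (Pproj y h + (Real.sqrt (1 - ‖y‖ ^ 2) : ℂ) • Qproj y h)) +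
            ip h y • (y - Pproj y x - (Real.sqrt (1 - ‖y‖ ^ 2) : ℂ) • Qproj y x)) := by
  have hden : 1 - ip x y ≠ 0 :=
    one_sub_ip_ne_zero (by nlinarith [norm_nonneg x, norm_nonneg y])
  have hM := hasFDerivAt_inv_one_sub_smul_sub (innerSL ℂ y)
    (PprojCLM y + (Real.sqrt (1 - ‖y‖ ^ 2) : ℂ) • QprojCLM y) y hden
  rw [← Mob_eq_inv_one_sub_smul_sub] at hM
  refine ⟨hM.differentiableAt, fun h => ?_⟩
  simp [hM.fderiv, ip_eq_innerSL, sub_sub]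
end

section
/- For y in the open unit ball 𝔹 of a complex Hilbert space H, the Fréchet derivative of the Möbius transformation M_y at the point y satisfies M_y'(y)h = −(1 − ‖y‖²)⁻¹ (P_y + sQ_y)h for every h ∈ H. -/
open Metric

variable {H : Type*} [NormedAddCommGroup H] [InnerProductSpace ℂ H]

/-!
Write `M_y x = (1 - ⟨x, y⟩)⁻¹ • (y - A x)` with the bounded linear map `A = P_y + s Q_y`, which
fixes `y`. The numerator thus vanishes at `x = y`, so the product rule leaves only the term
`-(1 - ‖y‖²)⁻¹ A`.
-/

section ProductRule

variable {𝕜 E F : Type*} [NontriviallyNormedField 𝕜] [NormedAddCommGroup E] [NormedSpace 𝕜 E]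
  [NormedAddCommGroup F] [NormedSpace 𝕜 F]

theorem hasFDerivAt_inv_one_sub_smul_sub_of_apply_eq (φ : E →L[𝕜] 𝕜) (A : E →L[𝕜] F)
    {x₀ : E} {c : F} (hφ : φ x₀ ≠ 1) (hA : A x₀ = c) :
    HasFDerivAt (fun x => (1 - φ x)⁻¹ • (c - A x)) (-((1 - φ x₀)⁻¹ • A)) x₀ := by
  have hden : DifferentiableAt 𝕜 (fun x => (1 - φ x)⁻¹) x₀ :=
    ((differentiableAt_const 1).sub φ.differentiableAt).inv (sub_ne_zero.2 hφ.symm)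
  have hnum : HasFDerivAt (fun x => c - A x) (0 - A) x₀ :=
    (hasFDerivAt_const c x₀).sub A.hasFDerivAt
  have hprod := hden.hasFDerivAt.smul hnum
  rwa [hA, sub_self, ContinuousLinearMap.smulRight_zero, add_zero, zero_sub, smul_neg] at hprod

end ProductRule

theorem ip_self (y : H) : ip y y = (‖y‖ ^ 2 : ℂ) := by
  rw [ip, inner_self_eq_norm_sq_to_K]
  norm_cast

theorem Pproj_self (y : H) : Pproj y y = y := by
  rcases eq_or_ne y 0 with rfl | hy
  · simp [Pproj]
  · rw [Pproj, ip_self, div_self (by simpa using hy), one_smul]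

theorem Qproj_self (y : H) : Qproj y y = 0 := by
  rw [Qproj, Pproj_self, sub_self]

noncomputable def PprojL (y : H) : H →L[ℂ] H :=
  (‖y‖ ^ 2 : ℂ)⁻¹ • (innerSL ℂ y).smulRight y

theorem PprojL_apply (y x : H) : PprojL y x = Pproj y x := by
  simp [PprojL, Pproj, ip, div_eq_inv_mul, smul_smul]

noncomputable def mobLinear (y : H) : H →L[ℂ] H :=
  PprojL y + (Real.sqrt (1 - ‖y‖ ^ 2) : ℂ) • (ContinuousLinearMap.id ℂ H - PprojL y)

theorem mobLinear_apply (y x : H) :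
    mobLinear y x = Pproj y x + (Real.sqrt (1 - ‖y‖ ^ 2) : ℂ) • Qproj y x := by
  simp [mobLinear, PprojL_apply, Qproj]

theorem mobLinear_self (y : H) : mobLinear y y = y := by
  rw [mobLinear_apply, Pproj_self, Qproj_self, smul_zero, add_zero]

theorem Mob_eq_inv_smul_sub_mobLinear (y : H) :
    Mob y = fun x => (1 - innerSL ℂ y x)⁻¹ • (y - mobLinear y x) := by
  funext x
  rw [Mob, mobLinear_apply, sub_sub, innerSL_apply_apply, ip]

/-- the Fréchet derivative of `M_y` at the point `y` is
`h ↦ -(1 - ‖y‖²)⁻¹ (P_y + s Q_y) h`, where `s = √(1 - ‖y‖²)`. -/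
theorem mob_fderiv_at_center (y : H) (hy : ‖y‖ < 1) :
    DifferentiableAt ℂ (Mob y) y ∧
      ∀ h : H, fderiv ℂ (Mob y) y h =
        -(((1 : ℂ) - (‖y‖ ^ 2 : ℝ))⁻¹ •
          (Pproj y h + (Real.sqrt (1 - ‖y‖ ^ 2) : ℂ) • Qproj y h)) := by
  have hφ : innerSL ℂ y y ≠ 1 := by
    rw [innerSL_apply_apply, ← ip, ip_self]
    exact_mod_cast (pow_lt_one₀ (norm_nonneg y) hy two_ne_zero).ne
  have hderiv := hasFDerivAt_inv_one_sub_smul_sub_of_apply_eq _ _ hφ (mobLinear_self y)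
  rw [← Mob_eq_inv_smul_sub_mobLinear] at hderiv
  refine ⟨hderiv.differentiableAt, fun h => ?_⟩
  rw [hderiv.fderiv, innerSL_apply_apply, ← ip, ip_self]
  simp [mobLinear_apply]
end

section
/- Let H be a complex Hilbert space with open unit ball 𝔹, let τ ∈ H with ‖τ‖ = 1, and let f : 𝔹 → H be holomorphic. If ⟨f(y), y − τ + ‖y‖²·τ − ⟨τ, y⟩·y⟩ = 0 for all y ∈ 𝔹, then f ≡ 0 on 𝔹. -/
/-!
With Mathlib's inner product `⟪·,·⟫` (conjugate-linear on the left) the hypothesis reads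
`⟪y, g y⟫ = ⟪τ, f y⟫` for the holomorphic map `g y = (1 - ⟪τ, y⟫) • f y + ⟪τ, f y⟫ • y`.
On a complex line `y₀ + z • w` the left side becomes `F z + conj z * G z` with `F`, `G`
holomorphic and `G 0 = ⟪w, g y₀⟫`; comparing the real derivatives at `0` in the directions `1`
and `I` forces `G 0 = 0`. Hence `g y₀ = 0`, pairing with `τ` gives `⟪τ, f y₀⟫ = 0`, so
`(1 - ⟪τ, y₀⟫) • f y₀ = 0` with `|⟪τ, y₀⟫| < 1`.
-/

open Metric

variable {H : Type*} [NormedAddCommGroup H] [InnerProductSpace ℂ H]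

open Filter Topology ComplexConjugate
open scoped InnerProductSpace

theorem Complex.eq_zero_of_eventually_add_conj_mul_eq_zero {F G : ℂ → ℂ} {z₀ : ℂ}
    (hF : DifferentiableAt ℂ F z₀) (hG : DifferentiableAt ℂ G z₀)
    (h : ∀ᶠ z in 𝓝 z₀, F z + conj z * G z = 0) : G z₀ = 0 := by
  have hΦ := (hF.hasFDerivAt.restrictScalars ℝ).add
    ((conjCLE : ℂ →L[ℝ] ℂ).hasFDerivAt.mul (hG.hasFDerivAt.restrictScalars ℝ))
  have hD := hΦ.unique ((hasFDerivAt_const 0 z₀).congr_of_eventuallyEq h)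
  have h1 := congrArg (· 1) hD
  have hI := congrArg (· I) hD
  simp only [ContinuousLinearEquiv.coe_coe, ContinuousAlgEquiv.coeCLE_apply, conjCAE_apply,
    add_apply, ContinuousLinearMap.coe_restrictScalars',
    fderiv_eq_smul_deriv, smul_eq_mul, one_mul, smul_apply, map_one,
    mul_one, zero_apply, conj_I, mul_neg] at h1 hI
  have : 2 * I * G z₀ = 0 := by linear_combination I * h1 - hI
  simpa using this

theorem eq_zero_of_eventually_inner_self_eq {g : H → H} {h : H → ℂ} {y₀ : H}
    (hg : DifferentiableAt ℂ g y₀) (hh : DifferentiableAt ℂ h y₀)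
    (heq : ∀ᶠ y in 𝓝 y₀, ⟪y, g y⟫_ℂ = h y) : g y₀ = 0 := by
  set w := g y₀
  let ℓ : ℂ → H := fun z => y₀ + z • w
  have hℓ : Differentiable ℂ ℓ := by fun_prop
  have hℓ0 : ℓ 0 = y₀ := by simp [ℓ]
  rw [← hℓ0] at hg hh heq
  suffices key : ⟪w, g (ℓ 0)⟫_ℂ = 0 by rwa [hℓ0, inner_self_eq_zero] at key
  refine Complex.eq_zero_of_eventually_add_conj_mul_eq_zero
    (F := fun z => ⟪y₀, g (ℓ z)⟫_ℂ - h (ℓ z)) (G := fun z => ⟪w, g (ℓ z)⟫_ℂ)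
    ?_ ?_ ?_
  · exact ((innerSL ℂ y₀).differentiableAt.comp _ (hg.comp _ hℓ.differentiableAt)).sub
      (hh.comp _ hℓ.differentiableAt)
  · exact (innerSL ℂ w).differentiableAt.comp _ (hg.comp _ hℓ.differentiableAt)
  · filter_upwards [hℓ.continuous.continuousAt.eventually heq] with z hz
    rw [← hz]
    simp only [ℓ, inner_add_left, inner_smul_left]
    ring

theorem inner_eq_of_ip_eq_zero (τ y v : H)
    (h : ip v (y - τ + (‖y‖ ^ 2 : ℂ) • τ - ip τ y • y) = 0) :
    ⟪y, (1 - ⟪τ, y⟫_ℂ) • v + ⟪τ, v⟫_ℂ • y⟫_ℂ = ⟪τ, v⟫_ℂ := by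
  simp only [ip, inner_sub_left, inner_add_left, inner_smul_left, map_pow,
    Complex.conj_ofReal, inner_conj_symm] at h
  rw [inner_add_right, inner_smul_right, inner_smul_right, inner_self_eq_norm_sq_to_K]
  linear_combination h

/-- if `f` is holomorphic on the open unit ball of a complex Hilbert
space, `τ` is a unit vector, and `⟨f y, y - τ + ‖y‖² τ - ⟨τ, y⟩ y⟩ = 0` for all `y`
in the ball, then `f ≡ 0` on the ball. -/
theorem orthogonality_implies_zero (f : H → H)
    (hf : DifferentiableOn ℂ f (ball (0 : H) 1))
    (τ : H) (hτ : ‖τ‖ = 1)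
    (horth : ∀ y ∈ ball (0 : H) 1,
      ip (f y) (y - τ + (‖y‖ ^ 2 : ℂ) • τ - ip τ y • y) = 0) :
    ∀ y ∈ ball (0 : H) 1, f y = 0 := by
  intro y₀ hy₀
  have hfy₀ : DifferentiableAt ℂ f y₀ := hf.differentiableAt (isOpen_ball.mem_nhds hy₀)
  have hc : 1 - ⟪τ, y₀⟫_ℂ ≠ 0 := by
    refine sub_ne_zero.2 (ne_of_apply_ne norm (ne_of_gt ?_))
    calc ‖⟪τ, y₀⟫_ℂ‖ ≤ ‖τ‖ * ‖y₀‖ := norm_inner_le_norm τ y₀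
      _ < ‖(1 : ℂ)‖ := by simpa [hτ] using hy₀
  have hg : (1 - ⟪τ, y₀⟫_ℂ) • f y₀ + ⟪τ, f y₀⟫_ℂ • y₀ = 0 := by
    refine eq_zero_of_eventually_inner_self_eq
      (g := fun y => (1 - ⟪τ, y⟫_ℂ) • f y + ⟪τ, f y⟫_ℂ • y)
      (h := fun y => ⟪τ, f y⟫_ℂ) ?_ ?_ ?_
    · exact ((differentiableAt_const _).sub (innerSL ℂ τ).differentiableAt).smul hfy₀ |>.add
        (((innerSL ℂ τ).differentiableAt.comp _ hfy₀).smul differentiableAt_id)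
    · exact (innerSL ℂ τ).differentiableAt.comp _ hfy₀
    · filter_upwards [isOpen_ball.mem_nhds hy₀] with y hy
      exact inner_eq_of_ip_eq_zero τ y (f y) (horth y hy)
  have hτf : ⟪τ, f y₀⟫_ℂ = 0 := by
    have := congrArg (⟪τ, ·⟫_ℂ) hg
    rw [inner_add_right, inner_smul_right, inner_smul_right, inner_zero_right] at this
    linear_combination this
  rw [hτf, zero_smul, add_zero] at hg
  exact (smul_eq_zero.1 hg).resolve_left hc
end
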